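/- arXiv:2107.10754 — 6 statements merged into one kernel-verified Lean document; each statement's English description precedes it below -/
import Mathlib

section
/- There exists a unique associative monoid operation • on W with identity element 1 such that for every simple reflection s ∈ S and every w ∈ W one has s • w = sw whenever ℓ(sw) = ℓ(w) + 1 and s • w = w whenever ℓ(sw) = ℓ(w) − 1, and likewise w • s = ws whenever ℓ(ws) = ℓ(w) + 1 and w • s = w whenever ℓ(ws) = ℓ(w) − 1 (the Demazure, or 0-Hecke, product). -/
namespace DemAux
open List

attribute [local instance] Classical.propDecidable

variable {B : Type*} {W : Type*} [Group W] {M : CoxeterMatrix B} (cs : CoxeterSystem M W)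

local prefix:100 "s" => cs.simple
local prefix:100 "ℓ" => cs.length
local prefix:100 "π" => cs.wordProd

noncomputable def sigmaFun (i : B) : W × ℤˣ → W × ℤˣ :=
  fun x => (s i * x.1 * s i, if x.1 = s i then -x.2 else x.2)

lemma conj_simple_eq_iff (i : B) (t u : W) : s i * t * s i = u ↔ t = s i * u * s i := by
  constructor
  · intro h; rw [← h]; simp [mul_assoc]
  · intro h; rw [h]; simp [mul_assoc]

lemma conj_eq_iff (x t u : W) : x * t * x⁻¹ = u ↔ t = x⁻¹ * u * x := by
  constructor
  · intro h; rw [← h]; simp [mul_assoc]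
  · intro h; rw [h]; simp [mul_assoc]

lemma sigmaFun_involutive (i : B) : Function.Involutive (sigmaFun cs i) := by
  rintro ⟨t, ε⟩
  simp only [sigmaFun]
  refine Prod.ext ?_ ?_
  · simp [mul_assoc]
  · simp only
    rcases eq_or_ne t (s i) with h | h
    · subst h; simp
    · have h2 : ¬ (s i * t * s i = s i) := by
        rw [conj_simple_eq_iff]; simpa using h
      simp [h, h2]

noncomputable def sigma (i : B) : Equiv.Perm (W × ℤˣ) :=
  Function.Involutive.toPerm _ (sigmaFun_involutive cs i)

lemma sigma_apply (i : B) (x : W × ℤˣ) :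
    sigma cs i x = (s i * x.1 * s i, if x.1 = s i then -x.2 else x.2) := rfl

lemma simple_mul_pow (i j : B) (r : ℕ) :
    s j * (s i * s j) ^ r = (s j * s i) ^ r * s j := by
  induction r with
  | zero => simp
  | succ n ih => rw [pow_succ, ← mul_assoc, ih, pow_succ]; simp [mul_assoc]

lemma tau_pow (i j : B) (k : ℕ) (t : W) (ε : ℤˣ) :
    ((sigma cs i * sigma cs j) ^ k) (t, ε) =
      ((s i * s j) ^ k * t * ((s i * s j) ^ k)⁻¹,
        ε * ∏ r ∈ Finset.range k,
          ((if (s i * s j) ^ r * t * ((s i * s j) ^ r)⁻¹ = s j then (-1 : ℤˣ) else 1) *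
           (if (s i * s j) ^ r * t * ((s i * s j) ^ r)⁻¹ = s j * s i * s j then (-1 : ℤˣ) else 1))) := by
  induction k generalizing t ε with
  | zero => simp
  | succ n ih =>
      rw [pow_succ, Equiv.Perm.mul_apply]
      have step : (sigma cs i * sigma cs j) (t, ε) =
          ((s i * s j) * t * ((s i * s j))⁻¹,
            ε * ((if t = s j then (-1 : ℤˣ) else 1) *
                 (if t = s j * s i * s j then (-1 : ℤˣ) else 1))) := by
        rw [Equiv.Perm.mul_apply, sigma_apply, sigma_apply]
        refine Prod.ext ?_ ?_
        · simp [mul_assoc]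
        · simp only
          rw [conj_simple_eq_iff cs j t (s i)]
          by_cases h1 : t = s j <;> by_cases h2 : t = s j * s i * s j <;>
            simp [h1, h2]
      rw [step, ih]
      refine Prod.ext ?_ ?_
      · simp only
        simp only [pow_succ, mul_inv_rev, mul_assoc]
      · simp only
        rw [Finset.prod_range_succ']
        have harg : ∀ r : ℕ, (s i * s j) ^ r * ((s i * s j) * t * (s i * s j)⁻¹) * ((s i * s j) ^ r)⁻¹
            = (s i * s j) ^ (r + 1) * t * ((s i * s j) ^ (r + 1))⁻¹ := by
          intro r
          simp only [pow_succ, mul_inv_rev, mul_assoc]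
        simp only [harg, pow_zero, one_mul, inv_one, mul_one]
        simp [mul_assoc, mul_comm, mul_left_comm]

lemma inv_pow_simple (i j : B) (r : ℕ) : ((s i * s j) ^ r)⁻¹ = (s j * s i) ^ r := by
  rw [← inv_pow]; congr 1; rw [mul_inv_rev]; simp

lemma key1 (i j : B) (r : ℕ) :
    ((s i * s j) ^ r)⁻¹ * s j * (s i * s j) ^ r = s j * (s i * s j) ^ (2 * r) := by
  rw [inv_pow_simple, ← simple_mul_pow, mul_assoc, ← pow_add, two_mul]

lemma key2 (i j : B) (r : ℕ) :
    ((s i * s j) ^ r)⁻¹ * (s j * s i * s j) * (s i * s j) ^ r = s j * (s i * s j) ^ (2 * r + 1) := by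
  have h2 : (s j * s i) ^ r * (s j * s i * s j) = (s j * s i) ^ (r + 1) * s j := by
    rw [pow_succ]; simp [mul_assoc]
  rw [inv_pow_simple, h2, ← simple_mul_pow, mul_assoc, ← pow_add]
  congr 2
  omega

lemma prod_range_two_mul {G : Type*} [CommMonoid G] (m : ℕ) (f : ℕ → G) :
    ∏ r ∈ Finset.range m, (f (2 * r) * f (2 * r + 1)) = ∏ q ∈ Finset.range (2 * m), f q := by
  induction m with
  | zero => simp
  | succ n ih =>
      rw [Finset.prod_range_succ, ih, Nat.mul_succ, Finset.prod_range_succ, Finset.prod_range_succ,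
        mul_assoc]

lemma sigma_liftable : M.IsLiftable (sigma cs) := by
  intro i j
  apply Equiv.ext
  rintro ⟨t, ε⟩
  rw [tau_pow]
  have hp : (s i * s j) ^ M i j = 1 := cs.simple_mul_simple_pow i j
  obtain ⟨g, hg⟩ : ∃ g : ℕ → ℤˣ, g = fun q => if t = s j * (s i * s j) ^ q then (-1 : ℤˣ) else 1 :=
    ⟨_, rfl⟩
  have hfact : ∀ r : ℕ,
      ((if (s i * s j) ^ r * t * ((s i * s j) ^ r)⁻¹ = s j then (-1 : ℤˣ) else 1) *
       (if (s i * s j) ^ r * t * ((s i * s j) ^ r)⁻¹ = s j * s i * s j then (-1 : ℤˣ) else 1))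
      = g (2 * r) * g (2 * r + 1) := by
    intro r
    rw [conj_eq_iff, conj_eq_iff, key1, key2, hg]
  simp only [hfact]
  rw [prod_range_two_mul _ g]
  have h2m : (2 * M i j) = M i j + M i j := two_mul _
  rw [h2m, Finset.prod_range_add]
  have hshift : ∀ q : ℕ, g (M i j + q) = g q := by
    intro q
    rw [hg]
    simp only
    rw [pow_add, hp, one_mul]
  simp only [hshift]
  rw [Int.units_mul_self, mul_one, hp]
  simp

noncomputable def phi : W →* Equiv.Perm (W × ℤˣ) := cs.lift ⟨sigma cs, sigma_liftable cs⟩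

lemma phi_simple (i : B) : phi cs (s i) = sigma cs i :=
  cs.lift_apply_simple (sigma_liftable cs) i

lemma phi_wordProd (ω : List B) (t : W) (ε : ℤˣ) :
    phi cs (π ω) (t, ε) =
      (π ω * t * (π ω)⁻¹, (-1 : ℤˣ) ^ ((cs.rightInvSeq ω).count t) * ε) := by
  induction ω with
  | nil => simp
  | cons i ω ih =>
      rw [CoxeterSystem.wordProd_cons, map_mul, Equiv.Perm.mul_apply, ih, phi_simple, sigma_apply]
      refine Prod.ext ?_ ?_
      · simp [mul_assoc]
      · simp only
        have hris : cs.rightInvSeq (i :: ω) = ((π ω)⁻¹ * s i * π ω) :: cs.rightInvSeq ω := rfl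
        rw [hris, conj_eq_iff (π ω) t (s i), List.count_cons]
        simp only [beq_iff_eq]
        by_cases ht : t = (π ω)⁻¹ * s i * π ω
        · rw [if_pos ht, if_pos ht.symm, pow_add, pow_one]
          simp [mul_neg_one, neg_mul]
        · rw [if_neg ht, if_neg (fun h => ht h.symm)]
          simp

lemma count_ris_parity (ω₁ ω₂ : List B) (h : π ω₁ = π ω₂) (t : W) :
    ((-1 : ℤˣ)) ^ ((cs.rightInvSeq ω₁).count t) = (-1 : ℤˣ) ^ ((cs.rightInvSeq ω₂).count t) := by
  have h1 := phi_wordProd cs ω₁ t 1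
  have h2 := phi_wordProd cs ω₂ t 1
  rw [h] at h1
  rw [h1] at h2
  have := congrArg Prod.snd h2
  simpa using this

lemma mem_rightInvSeq_of_descent (ω : List B) (hred : cs.IsReduced ω) (i : B)
    (h : ℓ (π ω * s i) < ℓ (π ω)) : (s i) ∈ cs.rightInvSeq ω := by
  obtain ⟨ω', hred', heq'⟩ := cs.exists_reduced_word' (π ω * s i)
  have hlen : ℓ (π ω * s i) + 1 = ℓ (π ω) := by
    rcases cs.length_mul_simple (π ω) i with h' | h'
    · omega
    · exact h'
  -- ω'' := ω'.concat i is a reduced word for π ω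
  have hprod : π (ω'.concat i) = π ω := by
    rw [cs.wordProd_concat, ← heq']
    simp [mul_assoc]
  have hred'' : cs.IsReduced (ω'.concat i) := by
    unfold CoxeterSystem.IsReduced at *
    rw [hprod, length_concat, ← hred', ← heq']
    omega
  have hmem : (s i) ∈ cs.rightInvSeq (ω'.concat i) := by
    rw [cs.rightInvSeq_concat]
    simp
  have hcount'' : (cs.rightInvSeq (ω'.concat i)).count (s i) = 1 :=
    List.count_eq_one_of_mem (hred''.nodup_rightInvSeq) hmem
  have hpar := count_ris_parity cs ω (ω'.concat i) (by rw [hprod]) (s i)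
  rw [hcount'', pow_one] at hpar
  by_contra hnot
  have : (cs.rightInvSeq ω).count (s i) = 0 := List.count_eq_zero_of_not_mem hnot
  rw [this, pow_zero] at hpar
  exact (by decide : ¬ ((1 : ℤˣ) = -1)) hpar

lemma exchange_right (ω : List B) (hred : cs.IsReduced ω) (i : B)
    (h : ℓ (π ω * s i) < ℓ (π ω)) :
    ∃ k < ω.length, π ω * s i = π (ω.eraseIdx k) := by
  obtain ⟨k, hk, hget⟩ := List.getElem_of_mem (mem_rightInvSeq_of_descent cs ω hred i h)
  rw [CoxeterSystem.length_rightInvSeq] at hk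
  refine ⟨k, hk, ?_⟩
  have := cs.wordProd_mul_getD_rightInvSeq ω k
  rw [List.getD_eq_getElem _ _ (by rwa [CoxeterSystem.length_rightInvSeq])] at this
  rw [hget] at this
  exact this

/-- The lifting property ("Z-lemma"). -/
lemma zlemma (i j : B) (x : W) (h1 : ℓ (s i * x) = ℓ x + 1) (h2 : ℓ (x * s j) = ℓ x + 1)
    (h3 : ℓ (s i * x * s j) ≠ ℓ x + 2) : s i * x = x * s j := by
  obtain ⟨ωx, hredx, heqx⟩ := cs.exists_reduced_word' x
  have hred : cs.IsReduced (i :: ωx) := by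
    unfold CoxeterSystem.IsReduced at *
    rw [cs.wordProd_cons, ← heqx, h1, List.length_cons, ← hredx, ← heqx]
  have hprod : π (i :: ωx) = s i * x := by rw [cs.wordProd_cons, ← heqx]
  have hdesc : ℓ (π (i :: ωx) * s j) < ℓ (π (i :: ωx)) := by
    rw [hprod]
    rcases cs.length_mul_simple (s i * x) j with h' | h'
    · exact absurd (by omega : ℓ (s i * x * s j) = ℓ x + 2) h3
    · omega
  obtain ⟨k, hk, hkeq⟩ := exchange_right cs (i :: ωx) hred j hdesc
  rw [hprod] at hkeq
  match k with
  | 0 =>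
      rw [List.eraseIdx_cons_zero, ← heqx] at hkeq
      have := congrArg (fun z => z * s j) hkeq
      simpa [mul_assoc] using this
  | (k' + 1) =>
      exfalso
      rw [List.eraseIdx_cons_succ, cs.wordProd_cons] at hkeq
      have hxj : x * s j = π (ωx.eraseIdx k') := by
        have := congrArg (fun z => s i * z) hkeq
        simpa [mul_assoc] using this
      have hlen : ℓ (x * s j) ≤ (ωx.eraseIdx k').length := by
        rw [hxj]; exact cs.length_wordProd_le _
      have hk' : k' < ωx.length := by simpa using hk
      rw [List.length_eraseIdx_of_lt hk'] at hlen
      have : ωx.length = ℓ x := by rw [← hredx, ← heqx]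
      omega

/-! ### Demazure operators -/

noncomputable def dl (i : B) (w : W) : W := if ℓ w < ℓ (s i * w) then s i * w else w

noncomputable def dr (j : B) (w : W) : W := if ℓ w < ℓ (w * s j) then w * s j else w

lemma dl_pos {i : B} {w : W} (h : ℓ w < ℓ (s i * w)) : dl cs i w = s i * w := by
  unfold dl; rw [if_pos h]

lemma dl_neg {i : B} {w : W} (h : ¬ ℓ w < ℓ (s i * w)) : dl cs i w = w := by
  unfold dl; rw [if_neg h]

lemma dr_pos {j : B} {w : W} (h : ℓ w < ℓ (w * s j)) : dr cs j w = w * s j := by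
  unfold dr; rw [if_pos h]

lemma dr_neg {j : B} {w : W} (h : ¬ ℓ w < ℓ (w * s j)) : dr cs j w = w := by
  unfold dr; rw [if_neg h]

lemma dl_idem (i : B) (w : W) : dl cs i (dl cs i w) = dl cs i w := by
  by_cases h : ℓ w < ℓ (s i * w)
  · rw [dl_pos cs h]
    refine dl_neg cs ?_
    rw [show s i * (s i * w) = w by simp]
    omega
  · rw [dl_neg cs h, dl_neg cs h]

lemma dl_dr_comm (i j : B) (w : W) : dl cs i (dr cs j w) = dr cs j (dl cs i w) := by
  rcases cs.length_simple_mul w i with hi | hi <;> rcases cs.length_mul_simple w j with hj | hj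
  · -- both up
    have e1 : dr cs j w = w * s j := dr_pos cs (by omega)
    have e2 : dl cs i w = s i * w := dl_pos cs (by omega)
    rcases cs.length_mul_simple (s i * w) j with hh | hh
    · -- generic case
      have e3 : dl cs i (w * s j) = s i * (w * s j) := dl_pos cs (by rw [← mul_assoc]; omega)
      have e4 : dr cs j (s i * w) = s i * w * s j := dr_pos cs (by omega)
      rw [e1, e2, e3, e4, mul_assoc]
    · -- the Z-lemma case
      have hz : s i * w = w * s j := zlemma cs i j w hi hj (by omega)
      have e3 : dl cs i (w * s j) = w * s j := dl_neg cs (by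
        rw [← hz, show s i * (s i * w) = w by simp]
        omega)
      have e4 : dr cs j (s i * w) = s i * w := dr_neg cs (by
        rw [hz, show w * s j * s j = w by simp]
        omega)
      rw [e1, e2, e3, e4, hz]
  · -- i up, j down
    have hle : ℓ (s i * (w * s j)) ≤ ℓ w := by
      have h1 := cs.length_mul_le (s i) (w * s j)
      rw [cs.length_simple] at h1
      omega
    have e1 : dr cs j w = w := dr_neg cs (by omega)
    have e2 : dl cs i w = s i * w := dl_pos cs (by omega)
    have e3 : dr cs j (s i * w) = s i * w := dr_neg cs (by rw [mul_assoc]; omega)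
    rw [e1, e2, e3]
  · -- i down, j up
    have hle : ℓ (s i * (w * s j)) ≤ ℓ w := by
      rw [← mul_assoc]
      have h1 := cs.length_mul_le (s i * w) (s j)
      rw [cs.length_simple] at h1
      omega
    have e1 : dr cs j w = w * s j := dr_pos cs (by omega)
    have e2 : dl cs i w = w := dl_neg cs (by omega)
    have e3 : dl cs i (w * s j) = w * s j := dl_neg cs (by omega)
    rw [e1, e2, e3, e1]
  · -- both down
    have e1 : dr cs j w = w := dr_neg cs (by omega)
    have e2 : dl cs i w = w := dl_neg cs (by omega)
    rw [e1, e2, e1]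

/-! ### The Demazure product -/

noncomputable def D (u v : W) : W :=
  if h : u = 1 then v
  else
    dl cs (cs.exists_leftDescent_of_ne_one h).choose
      (D (s (cs.exists_leftDescent_of_ne_one h).choose * u) v)
termination_by cs.length u
decreasing_by exact (cs.exists_leftDescent_of_ne_one h).choose_spec

lemma D_one (v : W) : D cs 1 v = v := by
  rw [D]
  simp

lemma D_ne (u v : W) (h : u ≠ 1) :
    D cs u v = dl cs (cs.exists_leftDescent_of_ne_one h).choose
      (D cs (s (cs.exists_leftDescent_of_ne_one h).choose * u) v) := by
  rw [D]
  rw [dif_neg h]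

lemma D_one_right (u : W) : D cs u 1 = u := by
  by_cases h : u = 1
  · subst h; exact D_one cs 1
  · rw [D_ne cs u 1 h]
    have hd : ℓ (s (cs.exists_leftDescent_of_ne_one h).choose * u) < ℓ u :=
      (cs.exists_leftDescent_of_ne_one h).choose_spec
    rw [D_one_right (s (cs.exists_leftDescent_of_ne_one h).choose * u)]
    rw [dl_pos cs (by rw [show s (cs.exists_leftDescent_of_ne_one h).choose *
      (s (cs.exists_leftDescent_of_ne_one h).choose * u) = u by simp]; exact hd)]
    simp
termination_by cs.length u
decreasing_by exact hd

lemma D_mul_right (u y : W) (j : B) (h : ℓ y < ℓ (y * s j)) :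
    D cs u (y * s j) = dr cs j (D cs u y) := by
  by_cases hu : u = 1
  · rw [hu, D_one, D_one, dr_pos cs h]
  · rw [D_ne cs u _ hu, D_ne cs u y hu]
    have hd : ℓ (s (cs.exists_leftDescent_of_ne_one hu).choose * u) < ℓ u :=
      (cs.exists_leftDescent_of_ne_one hu).choose_spec
    rw [D_mul_right (s (cs.exists_leftDescent_of_ne_one hu).choose * u) y j h, dl_dr_comm]
termination_by cs.length u
decreasing_by exact hd

lemma D_descent_indep (x : W) (i j : B) (hi : ℓ (s i * x) < ℓ x) (hj : ℓ (s j * x) < ℓ x)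
    (v : W) : dl cs i (D cs (s i * x) v) = dl cs j (D cs (s j * x) v) := by
  by_cases hv : v = 1
  · rw [hv, D_one_right, D_one_right]
    rw [dl_pos cs (by rw [show s i * (s i * x) = x by simp]; exact hi),
        dl_pos cs (by rw [show s j * (s j * x) = x by simp]; exact hj)]
    simp
  · obtain ⟨j', hj'⟩ := cs.exists_rightDescent_of_ne_one hv
    have hj2 : ℓ (v * s j') < ℓ v := hj'
    have hv' : (v * s j') * s j' = v := by simp
    have hyy : ℓ (v * s j') < ℓ ((v * s j') * s j') := by rw [hv']; exact hj2
    calc dl cs i (D cs (s i * x) v)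
        = dl cs i (D cs (s i * x) ((v * s j') * s j')) := by rw [hv']
      _ = dl cs i (dr cs j' (D cs (s i * x) (v * s j'))) := by
            rw [D_mul_right cs _ _ _ hyy]
      _ = dr cs j' (dl cs i (D cs (s i * x) (v * s j'))) := dl_dr_comm cs i j' _
      _ = dr cs j' (dl cs j (D cs (s j * x) (v * s j'))) := by
            rw [D_descent_indep x i j hi hj (v * s j')]
      _ = dl cs j (dr cs j' (D cs (s j * x) (v * s j'))) := (dl_dr_comm cs j j' _).symm
      _ = dl cs j (D cs (s j * x) ((v * s j') * s j')) := by
            rw [D_mul_right cs _ _ _ hyy]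
      _ = dl cs j (D cs (s j * x) v) := by rw [hv']
termination_by cs.length v
decreasing_by exact hj2

lemma D_simple_mul (u : W) (i : B) (h : ℓ u < ℓ (s i * u)) (v : W) :
    D cs (s i * u) v = dl cs i (D cs u v) := by
  have hne : s i * u ≠ 1 := by
    intro hx
    have h0 : ℓ (s i * u) = 0 := by rw [hx]; simp
    omega
  rw [D_ne cs _ v hne]
  have hds : ℓ (s (cs.exists_leftDescent_of_ne_one hne).choose * (s i * u)) < ℓ (s i * u) :=
    (cs.exists_leftDescent_of_ne_one hne).choose_spec
  have hii : ℓ (s i * (s i * u)) < ℓ (s i * u) := by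
    rw [show s i * (s i * u) = u by simp]
    exact h
  rw [D_descent_indep cs (s i * u) _ i hds hii v]
  rw [show s i * (s i * u) = u by simp]

lemma D_assoc (u v w : W) : D cs (D cs u v) w = D cs u (D cs v w) := by
  by_cases hu : u = 1
  · rw [hu, D_one, D_one]
  · rw [D_ne cs u v hu, D_ne cs u (D cs v w) hu]
    have hd : ℓ (s (cs.exists_leftDescent_of_ne_one hu).choose * u) < ℓ u :=
      (cs.exists_leftDescent_of_ne_one hu).choose_spec
    rw [← D_assoc (s (cs.exists_leftDescent_of_ne_one hu).choose * u) v w]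
    generalize hI : (cs.exists_leftDescent_of_ne_one hu).choose = i0
    generalize D cs (s i0 * u) v = x
    rcases cs.length_simple_mul x i0 with hx | hx
    · rw [dl_pos cs (by omega), D_simple_mul cs x i0 (by omega) w]
    · have hdlx : dl cs i0 x = x := dl_neg cs (by omega)
      have h2 : ℓ (s i0 * x) < ℓ (s i0 * (s i0 * x)) := by
        rw [show s i0 * (s i0 * x) = x by simp]
        omega
      have hstep : D cs x w = dl cs i0 (D cs (s i0 * x) w) := by
        have hh := D_simple_mul cs (s i0 * x) i0 h2 w
        rw [show s i0 * (s i0 * x) = x by simp] at hh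
        exact hh
      rw [hdlx, hstep, dl_idem]
termination_by cs.length u
decreasing_by exact hd

lemma D_simple_left (i : B) (w : W) : D cs (s i) w = dl cs i w := by
  have h : ℓ (1 : W) < ℓ (s i * 1) := by simp [cs.length_simple]
  have hh := D_simple_mul cs 1 i h w
  rw [mul_one] at hh
  rw [hh, D_one]

lemma D_simple_right (j : B) (w : W) : D cs w (s j) = dr cs j w := by
  have h : ℓ (1 : W) < ℓ ((1 : W) * s j) := by simp [cs.length_simple]
  have hh := D_mul_right cs w 1 j h
  rw [one_mul] at hh
  rw [hh, D_one_right]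

lemma D_unique (d : W → W → W)
    (hassoc : ∀ u v w : W, d (d u v) w = d u (d v w))
    (hone : ∀ w : W, d 1 w = w)
    (h4 : ∀ (i : B) (w : W), ℓ (s i * w) = ℓ w + 1 → d (s i) w = s i * w)
    (h5 : ∀ (i : B) (w : W), ℓ (s i * w) + 1 = ℓ w → d (s i) w = w)
    (u v : W) : d u v = D cs u v := by
  by_cases hu : u = 1
  · rw [hu, hone, D_one]
  · rw [D_ne cs u v hu]
    have hd : ℓ (s (cs.exists_leftDescent_of_ne_one hu).choose * u) < ℓ u :=
      (cs.exists_leftDescent_of_ne_one hu).choose_spec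
    have hrec := D_unique d hassoc hone h4 h5
        (s (cs.exists_leftDescent_of_ne_one hu).choose * u) v
    generalize hI : (cs.exists_leftDescent_of_ne_one hu).choose = i0 at hd hrec ⊢
    have hcan : s i0 * (s i0 * u) = u := by simp
    have hlen : ℓ (s i0 * (s i0 * u)) = ℓ (s i0 * u) + 1 := by
      rw [hcan]
      rcases cs.length_simple_mul u i0 with h' | h' <;> omega
    have h1 : d (s i0) (s i0 * u) = u := by rw [h4 i0 (s i0 * u) hlen, hcan]
    calc d u v = d (d (s i0) (s i0 * u)) v := by rw [h1]
      _ = d (s i0) (d (s i0 * u) v) := hassoc _ _ _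
      _ = d (s i0) (D cs (s i0 * u) v) := by rw [hrec]
      _ = dl cs i0 (D cs (s i0 * u) v) := by
          rcases cs.length_simple_mul (D cs (s i0 * u) v) i0 with hc | hc
          · rw [h4 i0 _ hc, dl_pos cs (by omega)]
          · rw [h5 i0 _ hc, dl_neg cs (by omega)]
termination_by cs.length u
decreasing_by exact (cs.exists_leftDescent_of_ne_one hu).choose_spec

end DemAux

/-- There is a unique associative monoid operation `d` on a Coxeter group `W` with identity
element `1` such that for every simple reflection `s` and every `w ∈ W` one has
`d s w = s * w` when `ℓ(s*w) = ℓ(w) + 1`, `d s w = w` when `ℓ(s*w) = ℓ(w) - 1`, and likewise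
`d w s = w * s` when `ℓ(w*s) = ℓ(w) + 1`, `d w s = w` when `ℓ(w*s) = ℓ(w) - 1`
(the Demazure, or 0-Hecke, product). -/
theorem demazure_product_exists_unique
    {B : Type*} [Finite B] {W : Type*} [Group W] {M : CoxeterMatrix B}
    (cs : CoxeterSystem M W) :
    ∃! d : W → W → W,
      (∀ u v w : W, d (d u v) w = d u (d v w)) ∧
      (∀ w : W, d 1 w = w) ∧
      (∀ w : W, d w 1 = w) ∧
      (∀ (i : B) (w : W), cs.length (cs.simple i * w) = cs.length w + 1 →
        d (cs.simple i) w = cs.simple i * w) ∧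
      (∀ (i : B) (w : W), cs.length (cs.simple i * w) + 1 = cs.length w →
        d (cs.simple i) w = w) ∧
      (∀ (i : B) (w : W), cs.length (w * cs.simple i) = cs.length w + 1 →
        d w (cs.simple i) = w * cs.simple i) ∧
      (∀ (i : B) (w : W), cs.length (w * cs.simple i) + 1 = cs.length w →
        d w (cs.simple i) = w) := by
  refine ⟨DemAux.D cs, ⟨DemAux.D_assoc cs, DemAux.D_one cs, DemAux.D_one_right cs,
    ?_, ?_, ?_, ?_⟩, ?_⟩
  · intro i w h
    rw [DemAux.D_simple_left cs i w, DemAux.dl_pos cs (by omega)]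
  · intro i w h
    rw [DemAux.D_simple_left cs i w, DemAux.dl_neg cs (by omega)]
  · intro i w h
    rw [DemAux.D_simple_right cs i w, DemAux.dr_pos cs (by omega)]
  · intro i w h
    rw [DemAux.D_simple_right cs i w, DemAux.dr_neg cs (by omega)]
  · rintro d ⟨hassoc, hone, -, h4, h5, -, -⟩
    funext u v
    exact DemAux.D_unique cs d hassoc hone h4 h5 u v
end

section
/- For every w ∈ W and every twisted involution x ∈ I_*, the element w • x • (w*)⁻¹ again belongs to I_*, i.e. (w • x • (w*)⁻¹)* = (w • x • (w*)⁻¹)⁻¹. -/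
namespace DemTw

open List

variable {B : Type*} {W : Type*} [Group W] {M : CoxeterMatrix B} (cs : CoxeterSystem M W)

open Classical in
noncomputable def etaFun (i : B) : W × ℤˣ → W × ℤˣ :=
  fun p => (cs.simple i * p.1 * cs.simple i, if p.1 = cs.simple i then -p.2 else p.2)

lemma conj_cancel {a u v : W} (ha : a * a = 1) : a * u * a = v ↔ u = a * v * a := by
  constructor
  · rintro rfl
    calc u = (a * a) * u * (a * a) := by rw [ha]; group
    _ = a * (a * u * a) * a := by group
  · rintro rfl
    calc a * (a * v * a) * a = (a * a) * v * (a * a) := by group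
    _ = v := by rw [ha]; group

lemma etaFun_invol (i : B) : Function.Involutive (etaFun cs i) := by
  rintro ⟨w, ε⟩
  unfold etaFun
  have hss := cs.simple_mul_simple_self i
  have h1 : cs.simple i * (cs.simple i * w * cs.simple i) * cs.simple i = w := by
    calc cs.simple i * (cs.simple i * w * cs.simple i) * cs.simple i
        = (cs.simple i * cs.simple i) * w * (cs.simple i * cs.simple i) := by group
      _ = w := by rw [hss]; group
  have h2 : (cs.simple i * w * cs.simple i = cs.simple i) ↔ w = cs.simple i := by
    rw [conj_cancel hss]
    constructor
    · intro h; rw [h, hss, one_mul]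
    · intro h; rw [h, hss, one_mul]
  refine Prod.ext h1 ?_
  by_cases h : w = cs.simple i
  · simp [h2, h]
  · simp [h2, h]

noncomputable def eta (i : B) : Equiv.Perm (W × ℤˣ) :=
  Function.Involutive.toPerm _ (etaFun_invol cs i)

open Classical in
lemma eta_apply (i : B) (p : W × ℤˣ) :
    eta cs i p = (cs.simple i * p.1 * cs.simple i, if p.1 = cs.simple i then -p.2 else p.2) := rfl


section Braid

variable (i j : B)

lemma sj_mul_pow (k : ℕ) :
    cs.simple j * (cs.simple i * cs.simple j) ^ k
      = (cs.simple j * cs.simple i) ^ k * cs.simple j := by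
  induction k with
  | zero => simp
  | succ k ih =>
    rw [pow_succ, ← mul_assoc, ih, pow_succ]
    group

lemma pow_conj_iff (k : ℕ) (t x : W) :
    (cs.simple i * cs.simple j) ^ k * t * (cs.simple j * cs.simple i) ^ k = x
      ↔ t = (cs.simple j * cs.simple i) ^ k * x * (cs.simple i * cs.simple j) ^ k := by
  have hq : (cs.simple j * cs.simple i) = (cs.simple i * cs.simple j)⁻¹ := by
    rw [mul_inv_rev, cs.inv_simple, cs.inv_simple]
  have hqc : (cs.simple j * cs.simple i) ^ k * (cs.simple i * cs.simple j) ^ k = 1 := by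
    rw [hq, inv_pow, inv_mul_cancel]
  have hcq : (cs.simple i * cs.simple j) ^ k * (cs.simple j * cs.simple i) ^ k = 1 := by
    rw [hq, inv_pow, mul_inv_cancel]
  constructor
  · rintro rfl
    calc t = ((cs.simple j * cs.simple i) ^ k * (cs.simple i * cs.simple j) ^ k) * t *
          ((cs.simple j * cs.simple i) ^ k * (cs.simple i * cs.simple j) ^ k) := by
            rw [hqc]; group
      _ = _ := by group
  · rintro rfl
    calc (cs.simple i * cs.simple j) ^ k *
          ((cs.simple j * cs.simple i) ^ k * x * (cs.simple i * cs.simple j) ^ k) *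
          (cs.simple j * cs.simple i) ^ k
        = ((cs.simple i * cs.simple j) ^ k * (cs.simple j * cs.simple i) ^ k) * x *
          ((cs.simple i * cs.simple j) ^ k * (cs.simple j * cs.simple i) ^ k) := by group
      _ = x := by rw [hcq]; group

lemma qpow_sj_cpow (k : ℕ) :
    (cs.simple j * cs.simple i) ^ k * cs.simple j * (cs.simple i * cs.simple j) ^ k
      = (cs.simple j * cs.simple i) ^ (2 * k) * cs.simple j := by
  rw [mul_assoc, sj_mul_pow, two_mul, pow_add]
  group

lemma qpow_sjsisj_cpow (k : ℕ) :
    (cs.simple j * cs.simple i) ^ k * (cs.simple j * cs.simple i * cs.simple j) *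
      (cs.simple i * cs.simple j) ^ k
      = (cs.simple j * cs.simple i) ^ (2 * k + 1) * cs.simple j := by
  have h1 : k + 1 + k = 2 * k + 1 := by ring
  calc (cs.simple j * cs.simple i) ^ k * (cs.simple j * cs.simple i * cs.simple j) *
        (cs.simple i * cs.simple j) ^ k
      = (cs.simple j * cs.simple i) ^ (k + 1) *
        (cs.simple j * (cs.simple i * cs.simple j) ^ k) := by rw [pow_succ]; group
    _ = (cs.simple j * cs.simple i) ^ (k + 1) *
        ((cs.simple j * cs.simple i) ^ k * cs.simple j) := by rw [sj_mul_pow]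
    _ = (cs.simple j * cs.simple i) ^ (2 * k + 1) * cs.simple j := by
        rw [← mul_assoc, ← pow_add, h1]

open Classical in
lemma eta_pow (k : ℕ) (t : W) (ε : ℤˣ) :
    ((eta cs i * eta cs j) ^ k) (t, ε) =
      ((cs.simple i * cs.simple j) ^ k * t * (cs.simple j * cs.simple i) ^ k,
        ((List.range (2 * k)).map
          (fun r => if (cs.simple j * cs.simple i) ^ r * cs.simple j = t
            then (-1 : ℤˣ) else 1)).prod * ε) := by
  induction k with
  | zero => simp
  | succ k ih =>
    rw [pow_succ', Equiv.Perm.mul_apply, ih, Equiv.Perm.mul_apply, eta_apply, eta_apply]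
    have hss := cs.simple_mul_simple_self j
    have hc1 : ((cs.simple i * cs.simple j) ^ k * t * (cs.simple j * cs.simple i) ^ k
        = cs.simple j) ↔ ((cs.simple j * cs.simple i) ^ (2 * k) * cs.simple j = t) := by
      rw [pow_conj_iff, qpow_sj_cpow, eq_comm]
    have hc2 : (cs.simple j * ((cs.simple i * cs.simple j) ^ k * t *
          (cs.simple j * cs.simple i) ^ k) * cs.simple j = cs.simple i)
        ↔ ((cs.simple j * cs.simple i) ^ (2 * k + 1) * cs.simple j = t) := by
      rw [conj_cancel hss, pow_conj_iff, qpow_sjsisj_cpow, eq_comm]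
    have hfst : cs.simple i * (cs.simple j * ((cs.simple i * cs.simple j) ^ k * t *
          (cs.simple j * cs.simple i) ^ k) * cs.simple j) * cs.simple i
        = (cs.simple i * cs.simple j) ^ (k + 1) * t * (cs.simple j * cs.simple i) ^ (k + 1) := by
      rw [pow_succ', pow_succ]
      group
    have hrange : (2 * (k + 1)) = (2 * k + 1) + 1 := by ring
    rw [hrange, List.range_succ, List.range_succ]
    simp only [List.map_append, List.prod_append, List.map_cons, List.map_nil,
      List.prod_cons, List.prod_nil]
    refine Prod.ext hfst ?_
    simp only [hc1, hc2]
    by_cases h1 : (cs.simple j * cs.simple i) ^ (2 * k) * cs.simple j = t <;>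
      by_cases h2 : (cs.simple j * cs.simple i) ^ (2 * k + 1) * cs.simple j = t <;>
      simp [h1, h2, mul_neg, neg_mul, neg_neg, mul_one, one_mul]

end Braid


open Classical in
lemma eta_liftable : M.IsLiftable (fun i => eta cs i) := by
  intro i j
  apply Equiv.ext
  rintro ⟨t, ε⟩
  rw [eta_pow]
  have hc : (cs.simple i * cs.simple j) ^ M i j = 1 := cs.simple_mul_simple_pow i j
  have hq : (cs.simple j * cs.simple i) ^ M i j = 1 := cs.simple_mul_simple_pow' i j
  have hsign : ((List.range (2 * M i j)).map
      (fun r => if (cs.simple j * cs.simple i) ^ r * cs.simple j = t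
        then (-1 : ℤˣ) else 1)).prod = 1 := by
    rw [two_mul, List.range_add, List.map_append, List.prod_append, List.map_map]
    have hmap : (List.range (M i j)).map
        ((fun r => if (cs.simple j * cs.simple i) ^ r * cs.simple j = t
          then (-1 : ℤˣ) else 1) ∘ (M i j + ·))
        = (List.range (M i j)).map
        (fun r => if (cs.simple j * cs.simple i) ^ r * cs.simple j = t
          then (-1 : ℤˣ) else 1) := by
      apply List.map_congr_left
      intro r _
      simp only [Function.comp_apply, pow_add, hq, one_mul]
    rw [hmap, Int.units_mul_self]
  rw [hc, hq, hsign]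
  simp

noncomputable def phi : W →* Equiv.Perm (W × ℤˣ) :=
  cs.lift ⟨fun i => eta cs i, eta_liftable cs⟩

lemma phi_simple (i : B) : phi cs (cs.simple i) = eta cs i :=
  cs.lift_apply_simple (eta_liftable cs) i

lemma mul_conj_iff (v x y : W) : v * x * v⁻¹ = y ↔ v⁻¹ * y * v = x := by
  constructor
  · rintro rfl; group
  · rintro rfl; group

open Classical in
lemma phi_wordProd (ω : List B) (t : W) (ε : ℤˣ) :
    phi cs (cs.wordProd ω) (t, ε) =
      (cs.wordProd ω * t * (cs.wordProd ω)⁻¹,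
        ((cs.rightInvSeq ω).map (fun x => if x = t then (-1 : ℤˣ) else 1)).prod * ε) := by
  induction ω with
  | nil => simp
  | cons i ω ih =>
    rw [cs.wordProd_cons, map_mul, Equiv.Perm.mul_apply, ih, phi_simple, eta_apply]
    have hris : cs.rightInvSeq (i :: ω)
        = ((cs.wordProd ω)⁻¹ * cs.simple i * cs.wordProd ω) :: cs.rightInvSeq ω := rfl
    rw [hris]
    have hfst : cs.simple i * (cs.wordProd ω * t * (cs.wordProd ω)⁻¹) * cs.simple i
        = cs.wordProd (i :: ω) * t * (cs.wordProd (i :: ω))⁻¹ := by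
      rw [cs.wordProd_cons, mul_inv_rev, cs.inv_simple]
      group
    refine Prod.ext hfst ?_
    simp only [List.map_cons, List.prod_cons]
    have hcond : (cs.wordProd ω * t * (cs.wordProd ω)⁻¹ = cs.simple i)
        ↔ ((cs.wordProd ω)⁻¹ * cs.simple i * cs.wordProd ω = t) := mul_conj_iff _ _ _
    simp only [hcond]
    by_cases h : (cs.wordProd ω)⁻¹ * cs.simple i * cs.wordProd ω = t <;>
      simp [h, mul_neg, neg_mul, mul_assoc]


open Classical in
/-- The lifting property: if `ℓ(s_i u) = ℓ(u)+1`, `ℓ(u s_j) = ℓ(u)+1` and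
`ℓ(s_i u s_j) = ℓ(u)`, then `s_i u = u s_j`. -/
lemma lifting (i j : B) (u : W)
    (h1 : cs.length (cs.simple i * u) = cs.length u + 1)
    (h2 : cs.length (u * cs.simple j) = cs.length u + 1)
    (h3 : cs.length (cs.simple i * u * cs.simple j) = cs.length u) :
    cs.simple i * u = u * cs.simple j := by
  obtain ⟨ω, hred, hω⟩ := cs.exists_reduced_word' u
  obtain ⟨β, hβred, hβ⟩ := cs.exists_reduced_word' (cs.simple i * u * cs.simple j)
  have hπ1 : cs.wordProd (i :: ω) = cs.simple i * u := by rw [cs.wordProd_cons, ← hω]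
  have hπ2 : cs.wordProd (β.concat j) = cs.simple i * u := by
    rw [cs.wordProd_concat, ← hβ, cs.simple_mul_simple_cancel_right]
  have hphi := congrArg (fun g => (g (cs.simple j, (1 : ℤˣ))).2)
    (congrArg (phi cs) (hπ1.trans hπ2.symm))
  simp only [phi_wordProd] at hphi
  -- compute the sign for the second word
  have hno_ris_β : ∀ x ∈ cs.rightInvSeq β, x ≠ cs.simple j := by
    intro x hx hxj
    subst hxj
    have hinv := cs.isRightInversion_of_mem_rightInvSeq hβred hx
    have hlt := hinv.2
    rw [← hβ, cs.simple_mul_simple_cancel_right] at hlt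
    omega
  have hsign2 : ((cs.rightInvSeq (β.concat j)).map
      (fun x => if x = cs.simple j then (-1 : ℤˣ) else 1)).prod = -1 := by
    rw [cs.rightInvSeq_concat]
    rw [List.concat_eq_append, List.map_append, List.prod_append]
    have hone : ((List.map (MulAut.conj (cs.simple j)) (cs.rightInvSeq β)).map
        (fun x => if x = cs.simple j then (-1 : ℤˣ) else 1)).prod = 1 := by
      apply List.prod_eq_one
      intro x hx
      simp only [List.mem_map] at hx
      obtain ⟨y, ⟨z, hz, rfl⟩, rfl⟩ := hx
      have hne : MulAut.conj (cs.simple j) z ≠ cs.simple j := by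
        intro hcontra
        apply hno_ris_β z hz
        rw [MulAut.conj_apply, cs.inv_simple,
          conj_cancel (cs.simple_mul_simple_self j)] at hcontra
        rw [hcontra, cs.simple_mul_simple_self, one_mul]
      exact if_neg hne
    rw [hone, one_mul]
    simp
  -- compute the sign for the first word
  have hno_ris_ω : ∀ x ∈ cs.rightInvSeq ω, x ≠ cs.simple j := by
    intro x hx hxj
    subst hxj
    have hinv := cs.isRightInversion_of_mem_rightInvSeq hred hx
    have hlt := hinv.2
    rw [← hω] at hlt
    omega
  have hsign1 : ((cs.rightInvSeq (i :: ω)).map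
      (fun x => if x = cs.simple j then (-1 : ℤˣ) else 1)).prod
      = (if (cs.wordProd ω)⁻¹ * cs.simple i * cs.wordProd ω = cs.simple j
          then (-1 : ℤˣ) else 1) := by
    have hris : cs.rightInvSeq (i :: ω)
        = ((cs.wordProd ω)⁻¹ * cs.simple i * cs.wordProd ω) :: cs.rightInvSeq ω := rfl
    rw [hris, List.map_cons, List.prod_cons]
    have hone : ((cs.rightInvSeq ω).map
        (fun x => if x = cs.simple j then (-1 : ℤˣ) else 1)).prod = 1 := by
      apply List.prod_eq_one
      intro x hx
      simp only [List.mem_map] at hx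
      obtain ⟨z, hz, rfl⟩ := hx
      exact if_neg (hno_ris_ω z hz)
    rw [hone, mul_one]
  rw [hsign1, hsign2] at hphi
  by_cases hcase : (cs.wordProd ω)⁻¹ * cs.simple i * cs.wordProd ω = cs.simple j
  · rw [← hω] at hcase
    calc cs.simple i * u = u * (u⁻¹ * cs.simple i * u) := by group
      _ = u * cs.simple j := by rw [hcase]
  · exfalso
    rw [if_neg hcase] at hphi
    simp at hphi


section Dem

variable (d : W → W → W)
    (hd_assoc : ∀ u v w : W, d (d u v) w = d u (d v w))
    (hd_one_left : ∀ w : W, d 1 w = w)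
    (hd_one_right : ∀ w : W, d w 1 = w)
    (hd_simple_lt : ∀ (i : B) (w : W), cs.length (cs.simple i * w) = cs.length w + 1 →
      d (cs.simple i) w = cs.simple i * w)
    (hd_simple_gt : ∀ (i : B) (w : W), cs.length (cs.simple i * w) + 1 = cs.length w →
      d (cs.simple i) w = w)

include hd_assoc hd_one_left hd_simple_lt hd_simple_gt in
lemma dRight : ∀ n : ℕ, ∀ u : W, cs.length u = n → ∀ j : B,
    (cs.length (u * cs.simple j) = cs.length u + 1 → d u (cs.simple j) = u * cs.simple j) ∧
    (cs.length (u * cs.simple j) + 1 = cs.length u → d u (cs.simple j) = u) := by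
  intro n
  induction n using Nat.strong_induction_on with
  | _ n ih =>
    intro u hu j
    by_cases h1 : u = 1
    · subst h1
      constructor
      · intro _
        rw [hd_one_left, one_mul]
      · intro habs
        rw [one_mul, cs.length_one, cs.length_simple] at habs
        omega
    · obtain ⟨i, hdesc⟩ := cs.exists_leftDescent_of_ne_one h1
      rw [cs.isLeftDescent_iff] at hdesc
      obtain ⟨u', hu'⟩ : ∃ u', u' = cs.simple i * u := ⟨_, rfl⟩
      rw [← hu'] at hdesc
      have hurec : u = cs.simple i * u' := by
        rw [hu', cs.simple_mul_simple_cancel_left]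
      have hlu' : cs.length u' + 1 = cs.length u := hdesc
      have hsiu' : cs.length (cs.simple i * u') = cs.length u' + 1 := by
        rw [← hurec]; omega
      have hstep : ∀ x, d u x = d (cs.simple i) (d u' x) := by
        intro x
        have hd1 : d (cs.simple i) u' = cs.simple i * u' := hd_simple_lt i u' hsiu'
        rw [← hurec] at hd1
        rw [show u = d (cs.simple i) u' from hd1.symm, hd_assoc]
      have ihu' := ih (cs.length u') (by omega) u' rfl j
      constructor
      · intro h
        have hc : cs.length (u' * cs.simple j) = cs.length u' + 1 := by
          rcases cs.length_mul_simple u' j with hcase | hcase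
          · exact hcase
          · exfalso
            have hb := cs.length_mul_le (cs.simple i) (u' * cs.simple j)
            rw [cs.length_simple] at hb
            have headj : cs.simple i * (u' * cs.simple j) = u * cs.simple j := by
              rw [hurec, mul_assoc]
            rw [headj] at hb
            omega
        have hd2 : d u' (cs.simple j) = u' * cs.simple j := ihu'.1 hc
        rw [hstep, hd2]
        have hlen : cs.length (cs.simple i * (u' * cs.simple j))
            = cs.length (u' * cs.simple j) + 1 := by
          rw [← mul_assoc, ← hurec, hc]
          omega
        rw [hd_simple_lt i _ hlen, ← mul_assoc, ← hurec]
      · intro h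
        rcases cs.length_mul_simple u' j with hcase | hcase
        · -- lifting case: s_i u' = u' s_j, so u = u' s_j
          have hlu's : cs.length (cs.simple i * u' * cs.simple j) = cs.length u' := by
            have heq : cs.simple i * u' * cs.simple j = u * cs.simple j := by
              rw [hurec]
            rw [heq]
            omega
          have hlift := lifting cs i j u' hsiu' hcase hlu's
          have hueq : u = u' * cs.simple j := by rw [hurec, hlift]
          have hd2 : d u' (cs.simple j) = u' * cs.simple j := ihu'.1 hcase
          rw [hstep, hd2, ← hueq]
          have hlen : cs.length (cs.simple i * u) + 1 = cs.length u := by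
            rw [← hu']
            omega
          exact hd_simple_gt i u hlen
        · have hd2 : d u' (cs.simple j) = u' := ihu'.2 hcase
          rw [hstep, hd2, hd_simple_lt i u' hsiu', ← hurec]


lemma map_wordProd (f : W ≃* W) (jm : B → B)
    (hjm : ∀ i, f (cs.simple i) = cs.simple (jm i)) (ω : List B) :
    f (cs.wordProd ω) = cs.wordProd (ω.map jm) := by
  induction ω with
  | nil => simp
  | cons i ω ih => rw [cs.wordProd_cons, map_mul, ih, hjm, List.map_cons, cs.wordProd_cons]

lemma length_map_le (f : W ≃* W)
    (hf_simple : ∀ i : B, ∃ j : B, f (cs.simple i) = cs.simple j) (u : W) :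
    cs.length (f u) ≤ cs.length u := by
  classical
  choose jm hjm using hf_simple
  obtain ⟨ω, hlen, rfl⟩ := cs.exists_reduced_word u
  rw [map_wordProd cs f jm hjm]
  calc cs.length (cs.wordProd (ω.map jm)) ≤ (ω.map jm).length := cs.length_wordProd_le _
    _ = ω.length := by simp
    _ = cs.length (cs.wordProd ω) := Eq.symm hlen

lemma length_map_eq (f : W ≃* W) (hf_invol : ∀ w : W, f (f w) = w)
    (hf_simple : ∀ i : B, ∃ j : B, f (cs.simple i) = cs.simple j) (u : W) :
    cs.length (f u) = cs.length u := by
  refine le_antisymm (length_map_le cs f hf_simple u) ?_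
  have h2 := length_map_le cs f hf_simple (f u)
  rwa [hf_invol] at h2

include hd_assoc hd_one_left hd_simple_lt hd_simple_gt in
lemma single_step (f : W ≃* W) (hf_invol : ∀ w : W, f (f w) = w)
    (hf_simple : ∀ i : B, ∃ j : B, f (cs.simple i) = cs.simple j)
    (y : W) (hy : f y = y⁻¹) (i j : B) (hj : f (cs.simple i) = cs.simple j) :
    f (d (d (cs.simple i) y) (cs.simple j)) = (d (d (cs.simple i) y) (cs.simple j))⁻¹ := by
  have hR := fun (u : W) (j : B) =>
    dRight cs d hd_assoc hd_one_left hd_simple_lt hd_simple_gt (cs.length u) u rfl j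
  have hfj : f (cs.simple j) = cs.simple i := by rw [← hj, hf_invol]
  have hfyinv : f y⁻¹ = y := by rw [map_inv, hy, inv_inv]
  have hlen_f := length_map_eq cs f hf_invol hf_simple
  have hyt : cs.length (y * cs.simple j) = cs.length (cs.simple i * y) := by
    have e1 : f (cs.simple j * y⁻¹) = cs.simple i * y := by rw [map_mul, hfj, hfyinv]
    calc cs.length (y * cs.simple j) = cs.length ((y * cs.simple j)⁻¹) := (cs.length_inv _).symm
      _ = cs.length (cs.simple j * y⁻¹) := by rw [mul_inv_rev, cs.inv_simple]
      _ = cs.length (f (cs.simple j * y⁻¹)) := (hlen_f _).symm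
      _ = cs.length (cs.simple i * y) := by rw [e1]
  rcases cs.length_simple_mul y i with h1 | h1
  · have hd1 : d (cs.simple i) y = cs.simple i * y := hd_simple_lt i y h1
    rw [hd1]
    rcases cs.length_mul_simple (cs.simple i * y) j with h2 | h2
    · have hd2 : d (cs.simple i * y) (cs.simple j) = cs.simple i * y * cs.simple j :=
        (hR (cs.simple i * y) j).1 h2
      rw [hd2]
      simp [map_mul, hj, hfj, hy, mul_inv_rev, cs.inv_simple, mul_assoc]
    · have hd2 : d (cs.simple i * y) (cs.simple j) = cs.simple i * y :=
        (hR (cs.simple i * y) j).2 h2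
      rw [hd2]
      have hys : cs.length (y * cs.simple j) = cs.length y + 1 := by omega
      have h3 : cs.length (cs.simple i * y * cs.simple j) = cs.length y := by omega
      have hlift := lifting cs i j y h1 hys h3
      have hinv : y⁻¹ * cs.simple i = cs.simple j * y⁻¹ := by
        have := congrArg (fun z : W => z⁻¹) hlift
        simpa [mul_inv_rev, cs.inv_simple] using this
      rw [map_mul, hj, hy, mul_inv_rev, cs.inv_simple, hinv]
  · have hd1 : d (cs.simple i) y = y := hd_simple_gt i y h1
    rw [hd1]
    have hys : cs.length (y * cs.simple j) + 1 = cs.length y := by omega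
    have hd2 : d y (cs.simple j) = y := (hR y j).2 hys
    rw [hd2, hy]

include hd_assoc hd_one_left hd_one_right hd_simple_lt hd_simple_gt in
lemma main_aux (f : W ≃* W) (hf_invol : ∀ w : W, f (f w) = w)
    (hf_simple : ∀ i : B, ∃ j : B, f (cs.simple i) = cs.simple j) :
    ∀ n : ℕ, ∀ w x : W, cs.length w = n → f x = x⁻¹ →
      f (d (d w x) (f w)⁻¹) = (d (d w x) (f w)⁻¹)⁻¹ := by
  intro n
  induction n using Nat.strong_induction_on with
  | _ n ih =>
    intro w x hw hx
    by_cases h1 : w = 1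
    · subst h1
      rw [hd_one_left, map_one, inv_one, hd_one_right]
      exact hx
    · obtain ⟨i, hdesc⟩ := cs.exists_leftDescent_of_ne_one h1
      rw [cs.isLeftDescent_iff] at hdesc
      obtain ⟨w', hw'⟩ : ∃ w', w' = cs.simple i * w := ⟨_, rfl⟩
      rw [← hw'] at hdesc
      have hwrec : w = cs.simple i * w' := by
        rw [hw', cs.simple_mul_simple_cancel_left]
      obtain ⟨j, hj⟩ := hf_simple i
      have hlen_f := length_map_eq cs f hf_invol hf_simple
      have hsiw' : cs.length (cs.simple i * w') = cs.length w' + 1 := by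
        rw [← hwrec]; omega
      have hstep : d w x = d (cs.simple i) (d w' x) := by
        have hd1 : d (cs.simple i) w' = cs.simple i * w' := hd_simple_lt i w' hsiw'
        rw [← hwrec] at hd1
        rw [show w = d (cs.simple i) w' from hd1.symm, hd_assoc]
      have hfw : (f w)⁻¹ = (f w')⁻¹ * cs.simple j := by
        rw [hwrec, map_mul, hj, mul_inv_rev, cs.inv_simple]
      have hflen : cs.length ((f w')⁻¹ * cs.simple j) = cs.length (f w')⁻¹ + 1 := by
        rw [← hfw, cs.length_inv, cs.length_inv, hlen_f, hlen_f]
        omega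
      have hdr : d (f w')⁻¹ (cs.simple j) = (f w')⁻¹ * cs.simple j :=
        (dRight cs d hd_assoc hd_one_left hd_simple_lt hd_simple_gt
          (cs.length (f w')⁻¹) _ rfl j).1 hflen
      rw [hstep, hfw, ← hdr,
        ← hd_assoc (d (cs.simple i) (d w' x)) ((f w')⁻¹) (cs.simple j),
        hd_assoc (cs.simple i) (d w' x) ((f w')⁻¹)]
      exact single_step cs d hd_assoc hd_one_left hd_simple_lt hd_simple_gt f hf_invol
        hf_simple (d (d w' x) (f w')⁻¹)
        (ih (cs.length w') (by omega) w' x rfl hx) i j hj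

end Dem

end DemTw

/-- For every `w ∈ W` and every twisted involution `x` (i.e. `x* = x⁻¹`), the element
`w • x • (w*)⁻¹` (Demazure products) is again a twisted involution. -/
theorem demazure_conjugate_mem_twisted_involutions
    {B : Type*} [Finite B] {W : Type*} [Group W] {M : CoxeterMatrix B}
    (cs : CoxeterSystem M W)
    (d : W → W → W)
    (hd_assoc : ∀ u v w : W, d (d u v) w = d u (d v w))
    (hd_one_left : ∀ w : W, d 1 w = w)
    (hd_one_right : ∀ w : W, d w 1 = w)
    (hd_simple_lt : ∀ (i : B) (w : W), cs.length (cs.simple i * w) = cs.length w + 1 →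
      d (cs.simple i) w = cs.simple i * w)
    (hd_simple_gt : ∀ (i : B) (w : W), cs.length (cs.simple i * w) + 1 = cs.length w →
      d (cs.simple i) w = w)
    (f : W ≃* W)
    (hf_invol : ∀ w : W, f (f w) = w)
    (hf_simple : ∀ i : B, ∃ j : B, f (cs.simple i) = cs.simple j) :
    ∀ w x : W, f x = x⁻¹ →
      f (d (d w x) (f w)⁻¹) = (d (d w x) (f w)⁻¹)⁻¹ := by
  intro w x hx
  exact DemTw.main_aux cs d hd_assoc hd_one_left hd_one_right hd_simple_lt hd_simple_gt
    f hf_invol hf_simple (cs.length w) w x rfl hx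
end

section
/- Let s ∈ S and x ∈ I_*. If sx ≠ xs* and ℓ(sx) = ℓ(x) + 1, then ℓ(sxs*) = ℓ(x) + 2 and s • x • s* = sxs*. -/
namespace DemazureAux

open CoxeterSystem List

variable {B : Type*} {W : Type*} [Group W] [DecidableEq W] {M : CoxeterMatrix B} (cs : CoxeterSystem M W)

/-- The Björner–Brenti style sign involution attached to a simple reflection. -/
def permFun (i : B) : W × ℤˣ → W × ℤˣ :=
  fun p => (cs.simple i * p.1 * cs.simple i,
    p.2 * (if p.1 = cs.simple i then -1 else 1))

lemma permFun_invol (i : B) : Function.Involutive (permFun cs i) := by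
  intro p
  have hcond : cs.simple i * p.1 * cs.simple i = cs.simple i ↔ p.1 = cs.simple i := by
    constructor
    · intro h
      have := congrArg (fun z => cs.simple i * z * cs.simple i) h
      simpa [mul_assoc, cs.simple_mul_simple_cancel_left, cs.simple_mul_simple_self] using this
    · intro h
      rw [h, cs.simple_mul_simple_self, one_mul]
  simp only [permFun, hcond]
  refine Prod.ext ?_ ?_
  · show cs.simple i * (cs.simple i * p.1 * cs.simple i) * cs.simple i = p.1
    rw [← mul_assoc, ← mul_assoc, cs.simple_mul_simple_self, one_mul,
      mul_assoc, cs.simple_mul_simple_self, mul_one]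
  · by_cases h : p.1 = cs.simple i <;> simp [h]

/-- The permutation representation generator. -/
def sigmaPerm (i : B) : Equiv.Perm (W × ℤˣ) := (permFun_invol cs i).toPerm

lemma sigmaPerm_apply (i : B) (t : W) (ε : ℤˣ) :
    sigmaPerm cs i (t, ε) = (cs.simple i * t * cs.simple i,
      ε * (if t = cs.simple i then -1 else 1)) := rfl


lemma cancel_key (i j : B) (n : ℕ) (t : W) :
    (cs.simple i * cs.simple j) * ((cs.simple j * cs.simple i) ^ (n + 2) * cs.simple j)
      * (cs.simple j * cs.simple i) = (cs.simple j * cs.simple i) ^ n * cs.simple j := by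
  rw [pow_succ', pow_succ]
  simp [mul_assoc, cs.simple_mul_simple_cancel_left, cs.simple_mul_simple_self]

lemma shift_iff (i j : B) (n : ℕ) (t : W) :
    (cs.simple i * cs.simple j) * t * (cs.simple j * cs.simple i)
      = (cs.simple j * cs.simple i) ^ n * cs.simple j
    ↔ t = (cs.simple j * cs.simple i) ^ (n + 2) * cs.simple j := by
  have key := cancel_key cs i j n t
  constructor
  · intro h
    have h2 := key.trans h.symm
    exact (mul_left_cancel (mul_right_cancel h2)).symm
  · intro h
    rw [h, key]

lemma sigma_pow (i j : B) (k : ℕ) (t : W) (ε : ℤˣ) :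
    ((sigmaPerm cs i * sigmaPerm cs j) ^ k) (t, ε) =
      ((cs.simple i * cs.simple j) ^ k * t * (cs.simple j * cs.simple i) ^ k,
       ε * ∏ n ∈ Finset.range (2 * k),
         (if t = (cs.simple j * cs.simple i) ^ n * cs.simple j then (-1 : ℤˣ) else 1)) := by
  induction k generalizing t ε with
  | zero => simp
  | succ k ih =>
    rw [pow_succ, Equiv.Perm.mul_apply]
    have step : (sigmaPerm cs i * sigmaPerm cs j) (t, ε) =
        ((cs.simple i * cs.simple j) * t * (cs.simple j * cs.simple i),
          ε * ((if t = cs.simple j then (-1 : ℤˣ) else 1) *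
          (if t = (cs.simple j * cs.simple i) * cs.simple j then (-1 : ℤˣ) else 1))) := by
      rw [Equiv.Perm.mul_apply, sigmaPerm_apply, sigmaPerm_apply]
      have hc : cs.simple j * t * cs.simple j = cs.simple i
          ↔ t = (cs.simple j * cs.simple i) * cs.simple j := by
        constructor
        · intro h
          have := congrArg (fun z => cs.simple j * z * cs.simple j) h
          rw [← mul_assoc, ← mul_assoc, cs.simple_mul_simple_self, one_mul, mul_assoc,
            cs.simple_mul_simple_self, mul_one] at this
          rw [this, mul_assoc]
        · intro h
          rw [h]
          simp [mul_assoc, cs.simple_mul_simple_cancel_left, cs.simple_mul_simple_self]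
      refine Prod.ext ?_ ?_
      · show cs.simple i * (cs.simple j * t * cs.simple j) * cs.simple i = _
        simp [mul_assoc]
      · show (ε * _) * _ = _
        rw [if_congr hc rfl rfl, mul_assoc]
    rw [step, ih]
    refine Prod.ext ?_ ?_
    · show _ * (_ * t * _) * _ = _
      rw [pow_succ (cs.simple i * cs.simple j) k, pow_succ' (cs.simple j * cs.simple i) k]
      simp [mul_assoc]
    · show _ = ε * ∏ n ∈ Finset.range (2 * (k + 1)), _
      have hprod : (∏ n ∈ Finset.range (2 * k),
            (if (cs.simple i * cs.simple j) * t * (cs.simple j * cs.simple i)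
              = (cs.simple j * cs.simple i) ^ n * cs.simple j then (-1 : ℤˣ) else 1))
          = ∏ n ∈ Finset.range (2 * k),
            (if t = (cs.simple j * cs.simple i) ^ (n + 2) * cs.simple j
              then (-1 : ℤˣ) else 1) :=
        Finset.prod_congr rfl fun n _ => if_congr (shift_iff cs i j n t) rfl rfl
      have hexp : (∏ n ∈ Finset.range (2 * (k + 1)),
            (if t = (cs.simple j * cs.simple i) ^ n * cs.simple j then (-1 : ℤˣ) else 1))
          = ((∏ n ∈ Finset.range (2 * k),
              (if t = (cs.simple j * cs.simple i) ^ (n + 2) * cs.simple j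
                then (-1 : ℤˣ) else 1))
            * (if t = (cs.simple j * cs.simple i) ^ 1 * cs.simple j then (-1 : ℤˣ) else 1))
            * (if t = (cs.simple j * cs.simple i) ^ 0 * cs.simple j then (-1 : ℤˣ) else 1) := by
        rw [show 2 * (k + 1) = (2 * k + 1) + 1 by ring, Finset.prod_range_succ',
          Finset.prod_range_succ']
      rw [hexp, hprod]
      simp only [pow_zero, one_mul, pow_one]
      rw [Units.ext_iff]
      push_cast
      ring

lemma sigma_liftable : M.IsLiftable (fun i => sigmaPerm cs i) := by
  intro i j
  rcases Nat.eq_zero_or_pos (M.M i j) with h | h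
  · rw [h, pow_zero]
  · refine Equiv.ext fun p => ?_
    obtain ⟨t, ε⟩ := p
    show ((sigmaPerm cs i * sigmaPerm cs j) ^ M.M i j) (t, ε) = (t, ε)
    rw [sigma_pow cs i j (M.M i j) t ε]
    have h1 : (cs.simple i * cs.simple j) ^ M.M i j = 1 := cs.simple_mul_simple_pow i j
    have h2 : (cs.simple j * cs.simple i) ^ M.M i j = 1 := cs.simple_mul_simple_pow' i j
    have hsign : (∏ n ∈ Finset.range (2 * M.M i j),
        (if t = (cs.simple j * cs.simple i) ^ n * cs.simple j then (-1 : ℤˣ) else 1)) = 1 := by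
      rw [two_mul, Finset.prod_range_add]
      have : ∀ n : ℕ, (if t = (cs.simple j * cs.simple i) ^ (M.M i j + n) * cs.simple j
          then (-1 : ℤˣ) else 1)
          = (if t = (cs.simple j * cs.simple i) ^ n * cs.simple j then (-1 : ℤˣ) else 1) := by
        intro n
        rw [pow_add, h2, one_mul]
      rw [Finset.prod_congr rfl fun n _ => this n]
      exact Int.units_mul_self _
    rw [h1, h2, hsign, one_mul, mul_one, mul_one]


/-- The Björner–Brenti permutation representation. -/
noncomputable def sigma : W →* Equiv.Perm (W × ℤˣ) :=
  cs.lift ⟨fun i => sigmaPerm cs i, sigma_liftable cs⟩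

lemma sigma_simple (i : B) : sigma cs (cs.simple i) = sigmaPerm cs i :=
  cs.lift_apply_simple (sigma_liftable cs) i

lemma count_map_conj (g : W) (L : List W) (t : W) :
    List.count t (List.map (⇑(MulAut.conj g)) L) = List.count (g⁻¹ * t * g) L := by
  have h : t = (MulAut.conj g) (g⁻¹ * t * g) := by
    simp [MulAut.conj_apply, mul_assoc]
  conv_lhs => rw [h]
  exact List.count_map_of_injective _ _ (MulAut.conj g).injective _

lemma count_lis_cons (i : B) (ω : List B) (t : W) :
    List.count t (cs.leftInvSeq (i :: ω))
      = List.count (cs.simple i * t * cs.simple i) (cs.leftInvSeq ω)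
        + (if t = cs.simple i then 1 else 0) := by
  rw [show cs.leftInvSeq (i :: ω)
      = cs.simple i :: List.map (⇑(MulAut.conj (cs.simple i))) (cs.leftInvSeq ω) from rfl,
    List.count_cons, count_map_conj]
  rw [cs.inv_simple]
  congr 1
  by_cases h : t = cs.simple i
  · simp [h]
  · simp [h, Ne.symm h]

lemma sigma_inv_wordProd (ω : List B) (t : W) (ε : ℤˣ) :
    sigma cs (cs.wordProd ω)⁻¹ (t, ε) =
      ((cs.wordProd ω)⁻¹ * t * cs.wordProd ω,
        ε * (-1) ^ (List.count t (cs.leftInvSeq ω))) := by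
  induction ω generalizing t ε with
  | nil => simp
  | cons i ω ih =>
    have hinv : (cs.wordProd (i :: ω))⁻¹ = (cs.wordProd ω)⁻¹ * cs.simple i := by
      rw [cs.wordProd_cons, mul_inv_rev, cs.inv_simple]
    rw [hinv, map_mul, Equiv.Perm.mul_apply, sigma_simple, sigmaPerm_apply, ih]
    refine Prod.ext ?_ ?_
    · dsimp only
      rw [cs.wordProd_cons]
      simp [mul_assoc]
    · dsimp only
      rw [count_lis_cons, pow_add]
      by_cases h : t = cs.simple i <;> simp only [h, if_pos, if_neg, pow_one, pow_zero,
        not_false_iff, if_true, if_false] <;>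
        (rw [Units.ext_iff]; push_cast; ring)

lemma count_lis_parity {ω ω' : List B} (h : cs.wordProd ω = cs.wordProd ω') (t : W) :
    ((-1 : ℤˣ)) ^ (List.count t (cs.leftInvSeq ω))
      = (-1) ^ (List.count t (cs.leftInvSeq ω')) := by
  have h1 := sigma_inv_wordProd cs ω t 1
  have h2 := sigma_inv_wordProd cs ω' t 1
  rw [h] at h1
  rw [h1] at h2
  have := (Prod.ext_iff.mp h2).2
  simpa using this

lemma simple_mem_leftInvSeq_of_descent {ω : List B} (hred : cs.IsReduced ω) (i : B)
    (h : cs.length (cs.simple i * cs.wordProd ω) < cs.length (cs.wordProd ω)) :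
    cs.simple i ∈ cs.leftInvSeq ω := by
  obtain ⟨ω', hred', hw'⟩ := cs.exists_reduced_word' (cs.simple i * cs.wordProd ω)
  have hπ : cs.wordProd (i :: ω') = cs.wordProd ω := by
    rw [cs.wordProd_cons, ← hw', ← mul_assoc, cs.simple_mul_simple_self, one_mul]
  have hnot : cs.simple i ∉ cs.leftInvSeq ω' := by
    intro hmem
    have hlt := (cs.isLeftInversion_of_mem_leftInvSeq hred' hmem).2
    rw [← hw', ← mul_assoc, cs.simple_mul_simple_self, one_mul] at hlt
    omega
  have hcount' : List.count (cs.simple i) (cs.leftInvSeq ω') = 0 :=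
    List.count_eq_zero.mpr hnot
  have hcount : List.count (cs.simple i) (cs.leftInvSeq (i :: ω')) = 1 := by
    rw [count_lis_cons, cs.simple_mul_simple_self, one_mul, if_pos rfl, hcount']
  have hpar := count_lis_parity cs hπ (cs.simple i)
  rw [hcount, pow_one] at hpar
  have hne : List.count (cs.simple i) (cs.leftInvSeq ω) ≠ 0 := by
    intro h0
    rw [h0, pow_zero] at hpar
    exact absurd hpar.symm (by decide)
  exact List.count_pos_iff.mp (Nat.pos_of_ne_zero hne)


lemma lifting {w : W} (i j : B) (hi : cs.length (cs.simple i * w) = cs.length w + 1)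
    (hij : cs.length (cs.simple i * (w * cs.simple j)) < cs.length (w * cs.simple j))
    (hj : cs.length (w * cs.simple j) = cs.length w + 1) :
    cs.simple i * w = w * cs.simple j := by
  obtain ⟨ω, hred, rfl⟩ := cs.exists_reduced_word' w
  have hπ2 : cs.wordProd (ω.concat j) = cs.wordProd ω * cs.simple j := cs.wordProd_concat j ω
  have hred2 : cs.IsReduced (ω.concat j) := by
    unfold CoxeterSystem.IsReduced at hred ⊢
    rw [hπ2, hj, List.length_concat, hred]
  have hmem := simple_mem_leftInvSeq_of_descent cs hred2 i (by rw [hπ2]; exact hij)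
  rw [cs.leftInvSeq_concat] at hmem
  rw [List.concat_eq_append, List.mem_append, List.mem_singleton] at hmem
  rcases hmem with hmem | heq
  · exfalso
    have hlt := (cs.isLeftInversion_of_mem_leftInvSeq hred hmem).2
    omega
  · rw [heq]
    simp [mul_assoc]

end DemazureAux

open DemazureAux in
/-- Let `s` be a simple reflection and `x` a twisted involution. If `s*x ≠ x*s⋆` and
`ℓ(s*x) = ℓ(x) + 1`, then `ℓ(s*x*s⋆) = ℓ(x) + 2` and `s • x • s⋆ = s*x*s⋆`. -/
theorem demazure_conjugate_simple_moved_up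
    {B : Type*} [Finite B] {W : Type*} [Group W] {M : CoxeterMatrix B}
    (cs : CoxeterSystem M W)
    (d : W → W → W)
    (hd_assoc : ∀ u v w : W, d (d u v) w = d u (d v w))
    (hd_one_left : ∀ w : W, d 1 w = w)
    (hd_one_right : ∀ w : W, d w 1 = w)
    (hd_simple_lt : ∀ (i : B) (w : W), cs.length (cs.simple i * w) = cs.length w + 1 →
      d (cs.simple i) w = cs.simple i * w)
    (hd_simple_gt : ∀ (i : B) (w : W), cs.length (cs.simple i * w) + 1 = cs.length w →
      d (cs.simple i) w = w)
    (f : W ≃* W)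
    (hf_invol : ∀ w : W, f (f w) = w)
    (hf_simple : ∀ i : B, ∃ j : B, f (cs.simple i) = cs.simple j) :
    ∀ (i : B) (x : W), f x = x⁻¹ →
      cs.simple i * x ≠ x * f (cs.simple i) →
      cs.length (cs.simple i * x) = cs.length x + 1 →
      cs.length (cs.simple i * x * f (cs.simple i)) = cs.length x + 2 ∧
      d (d (cs.simple i) x) (f (cs.simple i)) = cs.simple i * x * f (cs.simple i) := by
  classical
  -- `f` preserves lengths
  have hf_len : ∀ w : W, cs.length (f w) = cs.length w := by
    choose g hg using hf_simple
    have hle : ∀ w : W, cs.length (f w) ≤ cs.length w := by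
      intro w
      obtain ⟨ω, hred, rfl⟩ := cs.exists_reduced_word' w
      have hmap : f (cs.wordProd ω) = cs.wordProd (ω.map g) := by
        unfold CoxeterSystem.wordProd
        rw [map_list_prod, List.map_map, List.map_map]
        congr 1
        exact List.map_congr_left fun b _ => hg b
      rw [hmap]
      calc cs.length (cs.wordProd (ω.map g)) ≤ (ω.map g).length := cs.length_wordProd_le _
        _ = ω.length := List.length_map _
        _ = cs.length (cs.wordProd ω) := hred.symm
    intro w
    refine le_antisymm (hle w) ?_
    conv_lhs => rw [← hf_invol w]
    exact hle (f w)
  -- the right-multiplication rule for `d`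
  have hR : ∀ n : ℕ, ∀ w : W, cs.length w = n → ∀ j : B,
      cs.length (w * cs.simple j) = cs.length w + 1 → d w (cs.simple j) = w * cs.simple j := by
    intro n
    induction n using Nat.strong_induction_on with
    | _ n ih =>
      intro w hw j hj
      rcases eq_or_ne n 0 with h0 | h0
      · have : w = 1 := cs.length_eq_zero_iff.mp (by omega)
        rw [this, hd_one_left, one_mul]
      · obtain ⟨ω, hred, rfl⟩ := cs.exists_reduced_word' w
        cases ω with
        | nil => simp at hw; omega
        | cons i0 ω' =>
          have hred' : cs.IsReduced ω' := by
            have := hred.drop (j := 1)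
            simpa using this
          have hlw' : cs.length (cs.wordProd ω') = n - 1 := by
            have h1 : cs.length (cs.wordProd (i0 :: ω')) = ω'.length + 1 := by
              rw [hred]; simp
            have h2 : cs.length (cs.wordProd ω') = ω'.length := hred'
            omega
          have hsw' : cs.simple i0 * cs.wordProd ω' = cs.wordProd (i0 :: ω') :=
            (cs.wordProd_cons i0 ω').symm
          have hlsw' : cs.length (cs.simple i0 * cs.wordProd ω')
              = cs.length (cs.wordProd ω') + 1 := by
            rw [hsw', hw, hlw']; omega
          have hd0 : d (cs.simple i0) (cs.wordProd ω')
              = cs.simple i0 * cs.wordProd ω' := hd_simple_lt _ _ hlsw'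
          have hdw : d (cs.wordProd (i0 :: ω')) (cs.simple j)
              = d (cs.simple i0) (d (cs.wordProd ω') (cs.simple j)) := by
            rw [← hsw', ← hd0, hd_assoc]
          rcases cs.length_mul_simple (cs.wordProd ω') j with hup | hdown
          · have hIH := ih (n - 1) (by omega) (cs.wordProd ω') hlw' j (by rw [hup])
            rw [hdw, hIH, hd_simple_lt]
            · rw [← mul_assoc, hsw']
            · rw [← mul_assoc, hsw', hj, hw, hup, hlw']
              omega
          · exfalso
            have hle2 : cs.length (cs.wordProd (i0 :: ω') * cs.simple j)
                ≤ cs.length (cs.simple i0) + cs.length (cs.wordProd ω' * cs.simple j) := by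
              rw [← hsw', mul_assoc]
              exact cs.length_mul_le _ _
            rw [cs.length_simple] at hle2
            rw [hj, hw] at hle2
            omega
  intro i x hx hne hlen
  obtain ⟨j, hj⟩ := hf_simple i
  rw [hj] at hne ⊢
  -- ℓ(x s⋆) = ℓ(x) + 1
  have hxj : cs.length (x * cs.simple j) = cs.length x + 1 := by
    have hfx : f (x * cs.simple j) = x⁻¹ * cs.simple i := by
      rw [map_mul, hx, ← hj, hf_invol]
    calc cs.length (x * cs.simple j) = cs.length (f (x * cs.simple j)) := (hf_len _).symm
      _ = cs.length (x⁻¹ * cs.simple i) := by rw [hfx]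
      _ = cs.length ((x⁻¹ * cs.simple i)⁻¹) := (cs.length_inv _).symm
      _ = cs.length (cs.simple i * x) := by rw [mul_inv_rev, inv_inv, cs.inv_simple]
      _ = cs.length x + 1 := hlen
  -- ℓ(s x s⋆) = ℓ(x) + 2
  have hup : cs.length (cs.simple i * x * cs.simple j) = cs.length x + 2 := by
    rcases cs.length_simple_mul (x * cs.simple j) i with hu | hd
    · rw [mul_assoc, hu, hxj]
    · exfalso
      apply hne
      refine lifting cs i j hlen ?_ hxj
      omega
  refine ⟨hup, ?_⟩
  rw [hd_simple_lt i x hlen]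
  refine hR (cs.length (cs.simple i * x)) (cs.simple i * x) rfl j ?_
  rw [hup, hlen]
end

section
/- The map π : W → I_* defined by π(w) = w • (w*)⁻¹ is surjective; that is, for every twisted involution x ∈ I_* there exists w ∈ W with x = w • (w*)⁻¹. -/
open List

namespace DemazureAux

variable {B : Type*} {W : Type*} [Group W] {M : CoxeterMatrix B} (cs : CoxeterSystem M W)

open scoped Classical

/-- Tits' sign map. -/
noncomputable def eta (i : B) : W × ℤˣ → W × ℤˣ :=
  fun p => (cs.simple i * p.1 * cs.simple i, if p.1 = cs.simple i then -p.2 else p.2)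

theorem eta_involutive (i : B) : Function.Involutive (eta cs i) := by
  rintro ⟨t, e⟩
  by_cases h : t = cs.simple i
  · subst h
    simp [eta, cs.simple_mul_simple_self, cs.simple_mul_simple_cancel_left]
  · have h2 : cs.simple i * t * cs.simple i ≠ cs.simple i := by
      intro hc
      apply h
      have := congrArg (fun z => cs.simple i * z * cs.simple i) hc
      simp only [mul_assoc, cs.simple_mul_simple_self, mul_one] at this
      simpa [← mul_assoc, cs.simple_mul_simple_self] using this
    simp only [eta, if_neg h, if_neg h2]
    rw [Prod.mk.injEq]
    refine ⟨?_, rfl⟩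
    simp only [← mul_assoc, cs.simple_mul_simple_self, one_mul]
    rw [mul_assoc, cs.simple_mul_simple_self, mul_one]

/-- Tits' sign permutation. -/
noncomputable def etaPerm (i : B) : Equiv.Perm (W × ℤˣ) :=
  (eta_involutive cs i).toPerm

theorem etaPerm_apply (i : B) (p : W × ℤˣ) : etaPerm cs i p = eta cs i p := rfl

/-- The key product formula for a word. -/
theorem prod_map_etaPerm (ω : List B) (t : W) (e : ℤˣ) :
    (ω.map (etaPerm cs)).prod (t, e) =
      (cs.wordProd ω * t * (cs.wordProd ω)⁻¹,
        (-1 : ℤˣ) ^ ((cs.rightInvSeq ω).count t) * e) := by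
  induction ω with
  | nil => simp [cs.wordProd_nil, CoxeterSystem.rightInvSeq]
  | cons i ω ih =>
    rw [List.map_cons, List.prod_cons, Equiv.Perm.mul_apply, ih, etaPerm_apply]
    show (_, _) = _
    rw [CoxeterSystem.rightInvSeq, Prod.mk.injEq]
    constructor
    · rw [cs.wordProd_cons, mul_inv_rev, cs.inv_simple]
      group
    · by_cases hc : cs.wordProd ω * t * (cs.wordProd ω)⁻¹ = cs.simple i
      · have ht : (cs.wordProd ω)⁻¹ * cs.simple i * cs.wordProd ω = t := by
          rw [← hc]; group
      -- count (x :: l) with x = t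
        rw [if_pos hc, List.count_cons, if_pos (by simpa using ht)]
        rw [pow_succ]
        simp [mul_neg, neg_mul]
      · have ht : (cs.wordProd ω)⁻¹ * cs.simple i * cs.wordProd ω ≠ t := by
          intro hh
          apply hc
          rw [← hh]; group
        rw [if_neg hc, List.count_cons, if_neg (by simpa using ht)]
        simp


theorem semiconj_aux (a b : W) (n : ℕ) : b * (a * b) ^ n = (b * a) ^ n * b :=
  (SemiconjBy.pow_right (by simp [SemiconjBy, mul_assoc]) n)

theorem grp1 (a b : W) (ha : a⁻¹ = a) (hb : b⁻¹ = b) (j : ℕ) :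
    ((a * b) ^ j)⁻¹ * (b * (a * b) ^ j) = (b * a) ^ (j + j) * b := by
  rw [← inv_pow, mul_inv_rev, ha, hb, semiconj_aux, ← mul_assoc, ← pow_add]

theorem grp2 (a b : W) (ha : a⁻¹ = a) (hb : b⁻¹ = b) (j : ℕ) :
    (b * (a * b) ^ j)⁻¹ * (a * b) ^ (j + 1) = (b * a) ^ (2 * j + 1) * b := by
  rw [mul_inv_rev, ← inv_pow, mul_inv_rev, ha, hb]
  rw [mul_assoc, semiconj_aux, ← mul_assoc, ← pow_add]
  congr 2
  omega

theorem q_formula (i i' : B) (n : ℕ) :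
    (cs.wordProd (CoxeterSystem.alternatingWord i i' n))⁻¹
      * cs.wordProd (CoxeterSystem.alternatingWord i i' (n + 1))
      = (cs.simple i' * cs.simple i) ^ n * cs.simple i' := by
  rcases Nat.even_or_odd n with ⟨j, rfl⟩ | ⟨j, rfl⟩
  · have h1 : (j + j) / 2 = j := by omega
    have h2 : (j + j + 1) / 2 = j := by omega
    rw [cs.prod_alternatingWord_eq_mul_pow, cs.prod_alternatingWord_eq_mul_pow,
      if_pos ⟨j, rfl⟩, if_neg (by simp [Nat.even_add_one, parity_simps]), h1, h2, one_mul]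
    exact grp1 _ _ (cs.inv_simple i) (cs.inv_simple i') j
  · have h1 : (2 * j + 1) / 2 = j := by omega
    have h2 : (2 * j + 1 + 1) / 2 = j + 1 := by omega
    rw [cs.prod_alternatingWord_eq_mul_pow, cs.prod_alternatingWord_eq_mul_pow,
      if_neg (by simp [parity_simps]), if_pos (by exact ⟨j+1, by omega⟩), h1, h2, one_mul]
    exact grp2 _ _ (cs.inv_simple i) (cs.inv_simple i') j

theorem ris_alternatingWord (i i' : B) (n : ℕ) :
    cs.rightInvSeq (CoxeterSystem.alternatingWord i i' n)
      = (((List.range n).map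
          (fun k => (cs.simple i' * cs.simple i) ^ k * cs.simple i')).reverse) := by
  induction n with
  | zero => simp [CoxeterSystem.alternatingWord]
  | succ n ih =>
    rw [CoxeterSystem.alternatingWord_succ', CoxeterSystem.rightInvSeq, ih, List.range_succ]
    rw [List.map_append, List.reverse_append]
    simp only [List.map_cons, List.map_nil, List.reverse_cons, List.reverse_nil,
      List.nil_append, List.cons_append, List.singleton_append]
    congr 1
    have := q_formula cs i i' n
    rw [CoxeterSystem.alternatingWord_succ', cs.wordProd_cons] at this
    rw [← this]
    group


theorem pow_mul_etaPerm_eq_prod (i i' : B) (m : ℕ) :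
    (etaPerm cs i * etaPerm cs i') ^ m
      = ((CoxeterSystem.alternatingWord i i' (2 * m)).map (etaPerm cs)).prod := by
  induction m with
  | zero => simp [CoxeterSystem.alternatingWord]
  | succ m ih =>
    have h2 : 2 * (m + 1) = (2 * m) + 1 + 1 := by omega
    rw [h2, CoxeterSystem.alternatingWord_succ', CoxeterSystem.alternatingWord_succ',
      if_neg (by simp [parity_simps]), if_pos (by exact ⟨m, by omega⟩)]
    rw [List.map_cons, List.map_cons, List.prod_cons, List.prod_cons, ← ih, pow_succ']
    rw [← mul_assoc]

theorem etaPerm_liftable : M.IsLiftable (etaPerm cs) := by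
  intro i i'
  rw [pow_mul_etaPerm_eq_prod]
  ext ⟨t, e⟩ : 1
  rw [prod_map_etaPerm]
  have hprod : cs.wordProd (CoxeterSystem.alternatingWord i i' (2 * M i i')) = 1 := by
    rw [cs.prod_alternatingWord_eq_mul_pow, if_pos (by exact ⟨M i i', by omega⟩)]
    have : 2 * M i i' / 2 = M i i' := by omega
    rw [this, one_mul, cs.simple_mul_simple_pow]
  have hcount : Even ((cs.rightInvSeq (CoxeterSystem.alternatingWord i i' (2 * M i i'))).count t) := by
    rw [ris_alternatingWord, List.count_reverse]
    have h2 : 2 * M i i' = M i i' + M i i' := by omega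
    rw [h2, List.range_add, List.map_append, List.count_append, List.map_map]
    have hmap : (List.range (M i i')).map
        ((fun k => (cs.simple i' * cs.simple i) ^ k * cs.simple i') ∘ (fun x => M i i' + x))
        = (List.range (M i i')).map
          (fun k => (cs.simple i' * cs.simple i) ^ k * cs.simple i') := by
      apply List.map_congr_left
      intro k _
      simp only [Function.comp_apply]
      rw [pow_add, cs.simple_mul_simple_pow', one_mul]
    rw [hmap]
    exact ⟨_, rfl⟩
  rw [hprod, hcount.neg_one_pow, one_mul]
  simp

/-- The lifted homomorphism. -/
noncomputable def titsHom : W →* Equiv.Perm (W × ℤˣ) :=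
  cs.lift ⟨etaPerm cs, etaPerm_liftable cs⟩

theorem titsHom_wordProd (ω : List B) :
    titsHom cs (cs.wordProd ω) = (ω.map (etaPerm cs)).prod := by
  induction ω with
  | nil => simp [cs.wordProd_nil, titsHom]
  | cons i ω ih =>
    rw [cs.wordProd_cons, List.map_cons, List.prod_cons, map_mul, ih, titsHom,
      CoxeterSystem.lift_apply_simple]

/-- Parity of the number of occurrences in the right inversion sequence depends only
on the product of the word. -/
theorem count_parity_invariant {ω ω' : List B} (h : cs.wordProd ω = cs.wordProd ω') (t : W) :
    ((-1 : ℤˣ) ^ ((cs.rightInvSeq ω).count t)) = (-1 : ℤˣ) ^ ((cs.rightInvSeq ω').count t) := by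
  have h1 := titsHom_wordProd cs ω
  have h2 := titsHom_wordProd cs ω'
  rw [h] at h1
  have := h1.symm.trans h2
  have happ := congrArg (fun (g : Equiv.Perm (W × ℤˣ)) => (g (t, 1)).2) this
  simpa [prod_map_etaPerm] using happ


theorem right_exchange {w : W} {j : B} (hw : cs.length (w * cs.simple j) < cs.length w)
    {ω : List B} (hred : cs.IsReduced ω) (hπ : cs.wordProd ω = w) :
    ∃ k, k < ω.length ∧ w * cs.simple j = cs.wordProd (ω.eraseIdx k) := by
  obtain ⟨τ, hτred, hτ⟩ := cs.exists_reduced_word' (w * cs.simple j)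
  have hπ' : cs.wordProd (τ.concat j) = w := by
    rw [List.concat_eq_append, cs.wordProd_append, ← hτ]
    simp [cs.wordProd_cons, cs.wordProd_nil, cs.simple_mul_simple_cancel_right]
  -- count of s j in ris (τ.concat j) is odd
  have hnotmem : cs.simple j ∉ cs.rightInvSeq τ := by
    intro hmem
    have := cs.isRightInversion_of_mem_rightInvSeq hτred hmem
    rw [← hτ] at this
    have h2 := this.2
    rw [cs.simple_mul_simple_cancel_right] at h2
    omega
  have hcount' : (cs.rightInvSeq (τ.concat j)).count (cs.simple j) = 1 := by
    rw [cs.rightInvSeq_concat, List.concat_eq_append, List.count_append]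
    have h0 : (List.map (MulAut.conj (cs.simple j)) (cs.rightInvSeq τ)).count (cs.simple j)
        = 0 := by
      rw [List.count_eq_zero]
      intro hmem
      obtain ⟨u, hu, huev⟩ := List.mem_map.mp hmem
      apply hnotmem
      have : u = cs.simple j := by
        have : MulAut.conj (cs.simple j) u = MulAut.conj (cs.simple j) (cs.simple j) := by
          rw [huev]
          simp [MulAut.conj_apply, cs.simple_mul_simple_cancel_right,
            cs.simple_mul_simple_self, cs.inv_simple]
        exact (MulAut.conj (cs.simple j)).injective this
      rwa [this] at hu
    rw [h0]
    simp
  have hparity := count_parity_invariant cs (hπ.trans hπ'.symm) (cs.simple j)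
  rw [hcount', pow_one] at hparity
  have hmem : cs.simple j ∈ cs.rightInvSeq ω := by
    by_contra hninmem
    rw [List.count_eq_zero_of_not_mem hninmem, pow_zero] at hparity
    exact absurd hparity (by decide)
  obtain ⟨k, hk, hkeq⟩ := List.mem_iff_getElem.mp hmem
  rw [cs.length_rightInvSeq] at hk
  refine ⟨k, hk, ?_⟩
  have := cs.wordProd_mul_getD_rightInvSeq ω k
  rw [List.getD_eq_getElem _ 1 (by rw [cs.length_rightInvSeq]; exact hk), hkeq, hπ] at this
  exact this

theorem lifting_lemma {u : W} {i j : B}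
    (h1 : cs.length (cs.simple i * u) = cs.length u + 1)
    (h2 : cs.length (u * cs.simple j) = cs.length u + 1)
    (h3 : cs.length (cs.simple i * u * cs.simple j) = cs.length u) :
    cs.simple i * u = u * cs.simple j := by
  set v := u * cs.simple j with hv
  obtain ⟨τ, hτred, hτ⟩ := cs.exists_reduced_word' (cs.simple i * v)
  have hτlen : τ.length = cs.length u := by
    have := hτred
    rw [CoxeterSystem.IsReduced, ← hτ] at this
    rw [← this, hv, ← mul_assoc, h3]
  have hωred : cs.IsReduced (i :: τ) := by
    rw [CoxeterSystem.IsReduced, cs.wordProd_cons, ← hτ, cs.simple_mul_simple_cancel_left]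
    simp [hτlen, ← hv, h2]
  have hωπ : cs.wordProd (i :: τ) = v := by
    rw [cs.wordProd_cons, ← hτ, cs.simple_mul_simple_cancel_left]
  have hvj : cs.length (v * cs.simple j) < cs.length v := by
    rw [hv, cs.simple_mul_simple_cancel_right, h2]
    omega
  obtain ⟨k, hk, hkeq⟩ := right_exchange cs hvj hωred hωπ
  have hvju : v * cs.simple j = u := by rw [hv, cs.simple_mul_simple_cancel_right]
  match k with
  | 0 =>
    rw [hvju] at hkeq
    simp only [List.eraseIdx_cons_zero] at hkeq
    rw [← hτ] at hkeq
    -- u = s i * v = s i * u * s j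
    have := congrArg (fun z => cs.simple i * z) hkeq
    rw [cs.simple_mul_simple_cancel_left] at this
    exact this
  | k + 1 =>
    exfalso
    rw [hvju] at hkeq
    simp only [List.eraseIdx_cons_succ] at hkeq
    have : cs.simple i * u = cs.wordProd (τ.eraseIdx k) := by
      rw [hkeq, cs.wordProd_cons, cs.simple_mul_simple_cancel_left]
    have hlen : cs.length (cs.simple i * u) ≤ (τ.eraseIdx k).length := by
      rw [this]; exact cs.length_wordProd_le _
    have hklt : k < τ.length := by simpa using hk
    have := List.length_eraseIdx_add_one hklt
    omega


/-- Right-multiplication rules for the Demazure product. -/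
theorem d_right_simple (d : W → W → W)
    (hd_assoc : ∀ u v w : W, d (d u v) w = d u (d v w))
    (hd_one_left : ∀ w : W, d 1 w = w)
    (hd_simple_lt : ∀ (i : B) (w : W), cs.length (cs.simple i * w) = cs.length w + 1 →
      d (cs.simple i) w = cs.simple i * w)
    (hd_simple_gt : ∀ (i : B) (w : W), cs.length (cs.simple i * w) + 1 = cs.length w →
      d (cs.simple i) w = w) :
    ∀ (w : W) (j : B),
      (cs.length (w * cs.simple j) = cs.length w + 1 → d w (cs.simple j) = w * cs.simple j) ∧
      (cs.length (w * cs.simple j) + 1 = cs.length w → d w (cs.simple j) = w) := by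
  suffices H : ∀ (n : ℕ) (w : W), cs.length w = n → ∀ (j : B),
      (cs.length (w * cs.simple j) = cs.length w + 1 → d w (cs.simple j) = w * cs.simple j) ∧
      (cs.length (w * cs.simple j) + 1 = cs.length w → d w (cs.simple j) = w) by
    intro w j
    exact H (cs.length w) w rfl j
  intro n
  induction n using Nat.strong_induction_on with
  | _ n IH =>
    intro w hw j
    by_cases hw1 : w = 1
    · subst hw1
      constructor
      · intro _
        rw [hd_one_left, one_mul]
      · intro h
        exfalso
        rw [one_mul, cs.length_simple, cs.length_one] at h
        omega
    · obtain ⟨i, hdesc⟩ := cs.exists_leftDescent_of_ne_one hw1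
      rw [cs.isLeftDescent_iff] at hdesc
      obtain ⟨w', hw'def⟩ : ∃ w', w' = cs.simple i * w := ⟨_, rfl⟩
      rw [← hw'def] at hdesc
      have hcancel : cs.simple i * w' = w := by
        rw [hw'def, cs.simple_mul_simple_cancel_left]
      have hlt : cs.length (cs.simple i * w') = cs.length w' + 1 := by
        rw [hcancel]; omega
      have hdw : ∀ z, d w z = d (cs.simple i) (d w' z) := by
        intro z
        rw [← hd_assoc, hd_simple_lt i w' hlt, hcancel]
      have hw'lt : cs.length w' < n := by omega
      have IH' := IH (cs.length w') hw'lt w' rfl j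
      have hassocws : cs.simple i * (w' * cs.simple j) = w * cs.simple j := by
        rw [← mul_assoc, hcancel]
      constructor
      · intro hup
        rcases cs.length_mul_simple w' j with hup' | hdown'
        · have hliftlen : cs.length (cs.simple i * (w' * cs.simple j))
              = cs.length (w' * cs.simple j) + 1 := by
            rw [hassocws]
            omega
          rw [hdw, IH'.1 hup', hd_simple_lt i (w' * cs.simple j) hliftlen, hassocws]
        · exfalso
          rcases cs.length_simple_mul (w' * cs.simple j) i with h | h <;>
            rw [hassocws] at h <;> omega
      · intro hdown
        rcases cs.length_mul_simple w' j with hup' | hdown'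
        · -- lifting case: w = w' * s j
          have h3 : cs.length (cs.simple i * w' * cs.simple j) = cs.length w' := by
            rw [mul_assoc, hassocws]; omega
          have hlift := lifting_lemma cs hlt hup' h3
          have hweq : w = w' * cs.simple j := by rw [← hlift, hcancel]
          rw [hdw, IH'.1 hup', ← hweq, hd_simple_gt i w (by rw [← hw'def]; omega)]
        · rw [hdw, IH'.2 hdown', hd_simple_lt i w' hlt, hcancel]

/-- An automorphism preserving the simple system maps word products to word products. -/
theorem f_wordProd (f : W ≃* W) (hf_simple : ∀ i : B, ∃ j : B, f (cs.simple i) = cs.simple j)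
    (ω : List B) :
    f (cs.wordProd ω) = cs.wordProd (ω.map (fun i => Classical.choose (hf_simple i))) := by
  induction ω with
  | nil => simp [cs.wordProd_nil]
  | cons i ω ih =>
    rw [cs.wordProd_cons, map_mul, ih, List.map_cons, cs.wordProd_cons]
    exact congrArg (· * _) (Classical.choose_spec (hf_simple i))

theorem f_length_le (f : W ≃* W) (hf_simple : ∀ i : B, ∃ j : B, f (cs.simple i) = cs.simple j)
    (w : W) : cs.length (f w) ≤ cs.length w := by
  obtain ⟨ω, hlen, rfl⟩ := cs.exists_reduced_word w
  rw [f_wordProd cs f hf_simple]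
  calc cs.length (cs.wordProd (ω.map _)) ≤ (ω.map _).length := cs.length_wordProd_le _
    _ = ω.length := List.length_map _
    _ = cs.length (cs.wordProd ω) := Eq.symm hlen

theorem f_length (f : W ≃* W) (hf_simple : ∀ i : B, ∃ j : B, f (cs.simple i) = cs.simple j)
    (hf_invol : ∀ w : W, f (f w) = w) (w : W) :
    cs.length (f w) = cs.length w := by
  refine le_antisymm (f_length_le cs f hf_simple w) ?_
  have := f_length_le cs f hf_simple (f w)
  rwa [hf_invol] at this

end DemazureAux

/-- The map `π : W → I_*`, `π(w) = w • (w⋆)⁻¹` (Demazure product), is surjective onto the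
set of twisted involutions: every `x` with `x⋆ = x⁻¹` is of the form `w • (w⋆)⁻¹`. -/
theorem demazure_pi_surjective
    {B : Type*} [Finite B] {W : Type*} [Group W] {M : CoxeterMatrix B}
    (cs : CoxeterSystem M W)
    (d : W → W → W)
    (hd_assoc : ∀ u v w : W, d (d u v) w = d u (d v w))
    (hd_one_left : ∀ w : W, d 1 w = w)
    (hd_one_right : ∀ w : W, d w 1 = w)
    (hd_simple_lt : ∀ (i : B) (w : W), cs.length (cs.simple i * w) = cs.length w + 1 →
      d (cs.simple i) w = cs.simple i * w)
    (hd_simple_gt : ∀ (i : B) (w : W), cs.length (cs.simple i * w) + 1 = cs.length w →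
      d (cs.simple i) w = w)
    (f : W ≃* W)
    (hf_invol : ∀ w : W, f (f w) = w)
    (hf_simple : ∀ i : B, ∃ j : B, f (cs.simple i) = cs.simple j) :
    ∀ x : W, f x = x⁻¹ → ∃ w : W, x = d w (f w)⁻¹ := by
  classical
  have dright := DemazureAux.d_right_simple cs d hd_assoc hd_one_left hd_simple_lt hd_simple_gt
  have flen : ∀ w : W, cs.length (f w) = cs.length w :=
    DemazureAux.f_length cs f hf_simple hf_invol
  suffices H : ∀ (n : ℕ) (x : W), cs.length x = n → f x = x⁻¹ → ∃ w : W, x = d w (f w)⁻¹ by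
    intro x hx
    exact H (cs.length x) x rfl hx
  intro n
  induction n using Nat.strong_induction_on with
  | _ n IH =>
    intro x hn hx
    by_cases hx1 : x = 1
    · subst hx1
      exact ⟨1, by rw [map_one, inv_one, hd_one_left]⟩
    · obtain ⟨i, hdesc⟩ := cs.exists_leftDescent_of_ne_one hx1
      rw [cs.isLeftDescent_iff] at hdesc
      obtain ⟨j, hj⟩ := hf_simple i
      have hfj : f (cs.simple j) = cs.simple i := by
        have := hf_invol (cs.simple i); rwa [hj] at this
      have hxt : cs.length (x * cs.simple j) + 1 = cs.length x := by
        have hinv : (x * cs.simple j)⁻¹ = f (cs.simple i * x) := by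
          rw [map_mul, hj, hx, mul_inv_rev, cs.inv_simple]
        have hh : cs.length (x * cs.simple j) = cs.length (cs.simple i * x) := by
          calc cs.length (x * cs.simple j) = cs.length ((x * cs.simple j)⁻¹) :=
                (cs.length_inv _).symm
            _ = cs.length (f (cs.simple i * x)) := by rw [hinv]
            _ = cs.length (cs.simple i * x) := flen _
        omega
      obtain ⟨z, hzlen, hztw, hzj, hzx⟩ :
          ∃ z : W, cs.length z < n ∧ f z = z⁻¹ ∧
            (cs.length (z * cs.simple j) = cs.length z + 1) ∧
            d (cs.simple i) (z * cs.simple j) = x := by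
        rcases cs.length_mul_simple (cs.simple i * x) j with hyup | hydown
        · -- Case B : `s i * x * s j` has length `ℓ x`; lifting gives `x = s i * x * s j`.
          have h1 : cs.length (cs.simple i * (cs.simple i * x))
              = cs.length (cs.simple i * x) + 1 := by
            rw [cs.simple_mul_simple_cancel_left]; omega
          have h3 : cs.length (cs.simple i * (cs.simple i * x) * cs.simple j)
              = cs.length (cs.simple i * x) := by
            rw [cs.simple_mul_simple_cancel_left]; omega
          have hlift := DemazureAux.lifting_lemma cs h1 hyup h3
          have hB : x = cs.simple i * x * cs.simple j := by
            rw [cs.simple_mul_simple_cancel_left] at hlift; exact hlift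
          have hxj : x * cs.simple j = cs.simple i * x := by
            conv_lhs => rw [hB]
            exact cs.simple_mul_simple_cancel_right j
          refine ⟨cs.simple i * x, by omega, ?_, ?_, ?_⟩
          · rw [map_mul, hj, hx, mul_inv_rev, cs.inv_simple]
            have := congrArg (fun z : W => z⁻¹) hxj
            simpa [mul_inv_rev, cs.inv_simple] using this
          · exact hyup
          · rw [← hB]
            exact hd_simple_gt i x hdesc
        · -- Case A : `s i * x * s j` has length `ℓ x - 2`.
          refine ⟨cs.simple i * x * cs.simple j, by omega, ?_, ?_, ?_⟩
          · rw [map_mul, map_mul, hj, hfj, hx]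
            simp [mul_inv_rev, cs.inv_simple, mul_assoc]
          · rw [cs.simple_mul_simple_cancel_right]
            omega
          · rw [cs.simple_mul_simple_cancel_right,
              hd_simple_lt i (cs.simple i * x) (by rw [cs.simple_mul_simple_cancel_left]; omega)]
            exact cs.simple_mul_simple_cancel_left i
      obtain ⟨w, hwz⟩ := IH (cs.length z) hzlen z rfl hztw
      have hfwinvlen : cs.length ((f w)⁻¹) = cs.length w := by
        rw [cs.length_inv, flen]
      have hfwlen : cs.length ((f w)⁻¹ * cs.simple j) = cs.length (cs.simple i * w) := by
        have hinv : ((f w)⁻¹ * cs.simple j)⁻¹ = f (cs.simple i * w) := by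
          rw [map_mul, hj, mul_inv_rev, inv_inv, cs.inv_simple]
        calc cs.length ((f w)⁻¹ * cs.simple j)
            = cs.length (((f w)⁻¹ * cs.simple j)⁻¹) := (cs.length_inv _).symm
          _ = cs.length (f (cs.simple i * w)) := by rw [hinv]
          _ = cs.length (cs.simple i * w) := flen _
      have hchain : x = d (d (cs.simple i) w) (d (f w)⁻¹ (cs.simple j)) := by
        calc x = d (cs.simple i) (z * cs.simple j) := hzx.symm
          _ = d (cs.simple i) (d z (cs.simple j)) := by rw [(dright z j).1 hzj]
          _ = d (cs.simple i) (d (d w (f w)⁻¹) (cs.simple j)) := by rw [← hwz]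
          _ = d (cs.simple i) (d w (d (f w)⁻¹ (cs.simple j))) := by rw [hd_assoc]
          _ = d (d (cs.simple i) w) (d (f w)⁻¹ (cs.simple j)) := by rw [hd_assoc]
      rcases cs.length_simple_mul w i with hwup | hwdown
      · refine ⟨cs.simple i * w, ?_⟩
        have h1 : d (cs.simple i) w = cs.simple i * w := hd_simple_lt i w hwup
        have h2 : d (f w)⁻¹ (cs.simple j) = (f w)⁻¹ * cs.simple j :=
          (dright (f w)⁻¹ j).1 (by rw [hfwlen, hfwinvlen]; exact hwup)
        have h3 : (f (cs.simple i * w))⁻¹ = (f w)⁻¹ * cs.simple j := by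
          rw [map_mul, hj, mul_inv_rev, cs.inv_simple]
        rw [h3, ← h1, ← h2]
        exact hchain
      · refine ⟨w, ?_⟩
        have h1 : d (cs.simple i) w = w := hd_simple_gt i w hwdown
        have h2 : d (f w)⁻¹ (cs.simple j) = (f w)⁻¹ :=
          (dright (f w)⁻¹ j).2 (by rw [hfwlen, hfwinvlen]; omega)
        rw [hchain, h1, h2]
end

section
/- For all w, w' in W, the element w is an initial segment of w • w' (that is, ℓ(w • w') = ℓ(w) + ℓ(w⁻¹(w • w'))) and w' is a final segment of w • w' (that is, ℓ(w • w') = ℓ((w • w')w'⁻¹) + ℓ(w')). -/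
private lemma count_mod_card {p r m : ℕ} (hp : 0 < p) (hpm : p ∣ m) (hr : r < p) :
    ((Finset.range m).filter (fun k => k % p = r)).card = m / p := by
  rw [← Finset.card_range (m / p)]
  apply Finset.card_bij' (i := fun k _ => k / p) (j := fun j _ => p * j + r)
  · intro k hk
    simp only [Finset.mem_filter, Finset.mem_range] at hk ⊢
    exact Nat.div_lt_div_of_lt_of_dvd hpm hk.1
  · intro j hj
    simp only [Finset.mem_range] at hj
    simp only [Finset.mem_filter, Finset.mem_range]
    refine ⟨?_, ?_⟩
    · calc p * j + r < p * j + p := by omega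
        _ = p * (j + 1) := by ring
        _ ≤ p * (m / p) := Nat.mul_le_mul_left p hj
        _ = m := Nat.mul_div_cancel' hpm
    · rw [Nat.mul_add_mod, Nat.mod_eq_of_lt hr]
  · intro k hk
    simp only [Finset.mem_filter, Finset.mem_range] at hk
    rw [← hk.2, Nat.div_add_mod]
  · intro j hj
    rw [Nat.mul_add_div hp, Nat.div_eq_of_lt hr]; omega

private lemma even_counts {G : Type*} [Group G] [DecidableEq G] (h x : G) (m : ℕ)
    (hm : h ^ m = 1) (t : G) :
    Even ((((Finset.range m).filter (fun k => t = h ^ (2 * k) * x)).card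
        + ((Finset.range m).filter (fun k => t = h ^ (2 * k + 1) * x)).card)) := by
  rcases Nat.eq_zero_or_pos m with rfl | hm0
  · simp
  have hfin : IsOfFinOrder h := isOfFinOrder_iff_pow_eq_one.mpr ⟨m, hm0, hm⟩
  set n := orderOf h with hn
  have hnpos : 0 < n := hfin.orderOf_pos
  have hnm : n ∣ m := orderOf_dvd_of_pow_eq_one hm
  set g := Nat.gcd n 2 with hg
  set p := n / g with hp
  have hg2 : g ∣ 2 := Nat.gcd_dvd_right n 2
  have hgn : g ∣ n := Nat.gcd_dvd_left n 2
  have hgpos : 0 < g := Nat.gcd_pos_of_pos_left _ hnpos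
  have hppos : 0 < p := Nat.div_pos (Nat.le_of_dvd hnpos hgn) hgpos
  have hpn : p ∣ n := Nat.div_dvd_of_dvd hgn
  have hpm : p ∣ m := hpn.trans hnm
  have hgp : g * p = n := Nat.mul_div_cancel' hgn
  have hn2p : n ∣ 2 * p := by
    obtain ⟨c, hc⟩ := hg2
    refine ⟨c, ?_⟩
    calc 2 * p = (g * c) * p := by rw [← hc]
      _ = (g * p) * c := by ring
      _ = n * c := by rw [hgp]
  have key : ∀ (r k₀ : ℕ), t = h ^ (2 * k₀ + r) * x →
      ((Finset.range m).filter (fun k => t = h ^ (2 * k + r) * x)).card = m / p := by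
    intro r k₀ hk₀
    have hiff : ∀ k, (t = h ^ (2 * k + r) * x ↔ k % p = k₀ % p) := by
      intro k
      rw [hk₀, mul_left_inj, eq_comm, pow_eq_pow_iff_modEq, ← hn]
      constructor
      · intro hmod
        exact Nat.ModEq.cancel_left_div_gcd hnpos (Nat.ModEq.add_right_cancel' r hmod)
      · intro hmod
        exact ((Nat.ModEq.mul_left' 2 hmod).of_dvd hn2p).add_right r
    rw [Finset.filter_congr (fun k _ => by rw [hiff k])]
    exact count_mod_card hppos hpm (Nat.mod_lt _ hppos)
  have hempty : ∀ (r : ℕ), (¬ ∃ k₀, t = h ^ (2 * k₀ + r) * x) →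
      ((Finset.range m).filter (fun k => t = h ^ (2 * k + r) * x)).card = 0 := by
    intro r hr
    rw [Finset.filter_false_of_mem (fun k _ hk => hr ⟨k, hk⟩), Finset.card_empty]
  have hrw0 : ((Finset.range m).filter (fun k => t = h ^ (2 * k) * x))
      = ((Finset.range m).filter (fun k => t = h ^ (2 * k + 0) * x)) := by
    simp only [Nat.add_zero]
  rw [hrw0]
  rcases Nat.even_or_odd n with hne | hno
  · -- n even
    have hgeq : g = 2 := by
      rw [hg, Nat.gcd_comm]
      exact Nat.gcd_eq_left hne.two_dvd
    have heven : Even (m / p) := by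
      obtain ⟨q, hq⟩ := hnm
      have hm2 : m = p * (2 * q) := by
        rw [hq, ← hgp, hgeq]; ring
      rw [hm2, Nat.mul_div_cancel_left _ hppos]
      exact even_two_mul q
    have hev : ∀ r : ℕ, Even (((Finset.range m).filter
        (fun k => t = h ^ (2 * k + r) * x)).card) := by
      intro r
      by_cases hex : ∃ k₀, t = h ^ (2 * k₀ + r) * x
      · rw [key r hex.choose hex.choose_spec]; exact heven
      · rw [hempty r hex]; exact Even.zero
    exact (hev 0).add (hev 1)
  · -- n odd
    obtain ⟨n', hn'⟩ := hno
    have hpow_n : h ^ n = 1 := pow_orderOf_eq_one h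
    by_cases hex0 : ∃ k₀, t = h ^ (2 * k₀ + 0) * x
    · have hex1 : ∃ k₀, t = h ^ (2 * k₀ + 1) * x := by
        obtain ⟨k₀, hk₀⟩ := hex0
        refine ⟨k₀ + n', ?_⟩
        have : 2 * (k₀ + n') + 1 = (2 * k₀ + 0) + n := by omega
        rw [this, pow_add, hpow_n, mul_one, ← hk₀]
      rw [key 0 hex0.choose hex0.choose_spec, key 1 hex1.choose hex1.choose_spec]
      exact Even.add_self _
    · by_cases hex1 : ∃ k₀, t = h ^ (2 * k₀ + 1) * x
      · exfalso
        apply hex0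
        obtain ⟨k₁, hk₁⟩ := hex1
        refine ⟨k₁ + n' + 1, ?_⟩
        have : 2 * (k₁ + n' + 1) + 0 = (2 * k₁ + 1) + n := by omega
        rw [this, pow_add, hpow_n, mul_one, ← hk₁]
      · rw [hempty 0 hex0, hempty 1 hex1]; exact Even.zero


section part2
variable {B : Type*} {W : Type*} [Group W] [DecidableEq W] {M : CoxeterMatrix B}
  (cs : CoxeterSystem M W)

private def phiFun (i : B) : W × ℤˣ → W × ℤˣ :=
  fun p => (cs.simple i * p.1 * cs.simple i, if p.1 = cs.simple i then -p.2 else p.2)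

private lemma phiFun_involutive (i : B) : Function.Involutive (phiFun cs i) := by
  rintro ⟨t, ε⟩
  have hss := cs.simple_mul_simple_self i
  have h1 : cs.simple i * (cs.simple i * t * cs.simple i) * cs.simple i = t := by
    calc cs.simple i * (cs.simple i * t * cs.simple i) * cs.simple i
        = (cs.simple i * cs.simple i) * t * (cs.simple i * cs.simple i) := by group
      _ = t := by rw [hss]; group
  by_cases ht : t = cs.simple i
  · subst ht
    simp [phiFun, h1]
  · have h2 : ¬(cs.simple i * t * cs.simple i = cs.simple i) := by
      intro hh
      apply ht
      have := congrArg (fun z => cs.simple i * z * cs.simple i) hh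
      rw [h1] at this
      rw [this]
      calc cs.simple i * cs.simple i * cs.simple i
          = (cs.simple i * cs.simple i) * cs.simple i := by group
        _ = cs.simple i := by rw [hss]; group
    simp [phiFun, ht, h2, h1]

private def phi (i : B) : Equiv.Perm (W × ℤˣ) := (phiFun_involutive cs i).toPerm

private lemma phi_apply (i : B) (p : W × ℤˣ) : phi cs i p = phiFun cs i p := rfl

-- key dihedral identity: h^k * s_j * h^k = s_j  where h = s_j * s_i
private lemma key_conj (i j : B) (k : ℕ) :
    (cs.simple j * cs.simple i) ^ k * cs.simple j * (cs.simple j * cs.simple i) ^ k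
      = cs.simple j := by
  induction k with
  | zero => simp
  | succ k ih =>
    have h1 := cs.simple_mul_simple_self i
    have h2 := cs.simple_mul_simple_self j
    have hstep : (cs.simple j * cs.simple i) * cs.simple j * (cs.simple j * cs.simple i)
        = cs.simple j := by
      calc (cs.simple j * cs.simple i) * cs.simple j * (cs.simple j * cs.simple i)
          = cs.simple j * cs.simple i * (cs.simple j * cs.simple j) * cs.simple i := by group
        _ = cs.simple j * (cs.simple i * cs.simple i) := by rw [h2]; group
        _ = cs.simple j := by rw [h1]; group
    calc (cs.simple j * cs.simple i) ^ (k+1) * cs.simple j * (cs.simple j * cs.simple i) ^ (k+1)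
        = (cs.simple j * cs.simple i) ^ k *
            ((cs.simple j * cs.simple i) * cs.simple j * (cs.simple j * cs.simple i)) *
            (cs.simple j * cs.simple i) ^ k := by
          nth_rewrite 2 [pow_succ']
          rw [pow_succ]; simp only [mul_assoc]
      _ = (cs.simple j * cs.simple i) ^ k * cs.simple j * (cs.simple j * cs.simple i) ^ k := by
          rw [hstep]
      _ = cs.simple j := ih

private lemma E1 (i j : B) (k : ℕ) :
    (cs.simple j * cs.simple i) ^ k * cs.simple j * ((cs.simple j * cs.simple i) ^ k)⁻¹
      = (cs.simple j * cs.simple i) ^ (2 * k) * cs.simple j := by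
  have hk := key_conj cs i j k
  rw [two_mul, pow_add]
  calc (cs.simple j * cs.simple i) ^ k * cs.simple j * ((cs.simple j * cs.simple i) ^ k)⁻¹
      = (cs.simple j * cs.simple i) ^ k *
        ((cs.simple j * cs.simple i) ^ k * cs.simple j * (cs.simple j * cs.simple i) ^ k) *
        ((cs.simple j * cs.simple i) ^ k)⁻¹ := by rw [hk]
    _ = (cs.simple j * cs.simple i) ^ k * (cs.simple j * cs.simple i) ^ k * cs.simple j := by
        group

private lemma E2 (i j : B) (k : ℕ) :
    (cs.simple j * cs.simple i) ^ k * (cs.simple j * cs.simple i * cs.simple j) *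
        ((cs.simple j * cs.simple i) ^ k)⁻¹
      = (cs.simple j * cs.simple i) ^ (2 * k + 1) * cs.simple j := by
  have h1 := E1 cs i j k
  have hcomm : (cs.simple j * cs.simple i) ^ k * (cs.simple j * cs.simple i)
      = (cs.simple j * cs.simple i) * (cs.simple j * cs.simple i) ^ k := by
    rw [← pow_succ, ← pow_succ']
  calc (cs.simple j * cs.simple i) ^ k * (cs.simple j * cs.simple i * cs.simple j) *
        ((cs.simple j * cs.simple i) ^ k)⁻¹
      = ((cs.simple j * cs.simple i) ^ k * (cs.simple j * cs.simple i)) * cs.simple j *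
        ((cs.simple j * cs.simple i) ^ k)⁻¹ := by group
    _ = ((cs.simple j * cs.simple i) * (cs.simple j * cs.simple i) ^ k) * cs.simple j *
        ((cs.simple j * cs.simple i) ^ k)⁻¹ := by rw [hcomm]
    _ = (cs.simple j * cs.simple i) *
        ((cs.simple j * cs.simple i) ^ k * cs.simple j *
          ((cs.simple j * cs.simple i) ^ k)⁻¹) := by group
    _ = (cs.simple j * cs.simple i) * ((cs.simple j * cs.simple i) ^ (2*k) * cs.simple j) := by
        rw [h1]
    _ = (cs.simple j * cs.simple i) ^ (2 * k + 1) * cs.simple j := by rw [pow_succ']; group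

end part2

section part2b
variable {B : Type*} {W : Type*} [Group W] [DecidableEq W] {M : CoxeterMatrix B}
  (cs : CoxeterSystem M W)

private lemma conj_eq_iff {a c t : W} : a * t * a⁻¹ = c ↔ t = a⁻¹ * c * a := by
  constructor
  · intro hh; rw [← hh]; group
  · intro hh; rw [hh]; group

private lemma sandwich_iff {u a c : W} (hu : u * u = 1) : u * a * u = c ↔ a = u * c * u := by
  constructor
  · intro hh
    rw [← hh]
    calc a = (u * u) * a * (u * u) := by rw [hu]; group
      _ = u * (u * a * u) * u := by group
  · intro hh
    rw [hh]
    calc u * (u * c * u) * u = (u * u) * c * (u * u) := by group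
      _ = c := by rw [hu]; group

private lemma phi_mul_pow (i j : B) (k : ℕ) (t : W) (ε : ℤˣ) :
    ((phi cs i * phi cs j) ^ k) (t, ε) =
      ((cs.simple i * cs.simple j) ^ k * t * ((cs.simple i * cs.simple j) ^ k)⁻¹,
       ε * ∏ l ∈ Finset.range k,
         ((if t = (cs.simple j * cs.simple i) ^ (2 * l) * cs.simple j then (-1 : ℤˣ) else 1) *
          (if t = (cs.simple j * cs.simple i) ^ (2 * l + 1) * cs.simple j then (-1 : ℤˣ) else 1)))
    := by
  have hginv : (cs.simple i * cs.simple j)⁻¹ = cs.simple j * cs.simple i := by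
    rw [mul_inv_rev, cs.inv_simple, cs.inv_simple]
  have hgk : ∀ k : ℕ, ((cs.simple i * cs.simple j) ^ k)⁻¹ = (cs.simple j * cs.simple i) ^ k := by
    intro k; rw [← inv_pow, hginv]
  have hgk' : ∀ k : ℕ, (cs.simple i * cs.simple j) ^ k = ((cs.simple j * cs.simple i) ^ k)⁻¹ := by
    intro k; rw [← hgk, inv_inv]
  induction k with
  | zero => simp
  | succ k ih =>
    rw [pow_succ', Equiv.Perm.mul_apply, ih, Equiv.Perm.mul_apply, phi_apply, phi_apply]
    have IF1 : ((cs.simple i * cs.simple j) ^ k * t * ((cs.simple i * cs.simple j) ^ k)⁻¹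
        = cs.simple j) ↔ (t = (cs.simple j * cs.simple i) ^ (2 * k) * cs.simple j) := by
      rw [conj_eq_iff, hgk, hgk', E1]
    have IF2 : (cs.simple j * ((cs.simple i * cs.simple j) ^ k * t *
          ((cs.simple i * cs.simple j) ^ k)⁻¹) * cs.simple j = cs.simple i)
        ↔ (t = (cs.simple j * cs.simple i) ^ (2 * k + 1) * cs.simple j) := by
      rw [sandwich_iff (cs.simple_mul_simple_self j), conj_eq_iff, hgk, hgk', E2]
    simp only [phiFun]
    refine Prod.ext ?_ ?_
    · show cs.simple i * (cs.simple j * ((cs.simple i * cs.simple j) ^ k * t *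
          ((cs.simple i * cs.simple j) ^ k)⁻¹) * cs.simple j) * cs.simple i = _
      rw [pow_succ' (cs.simple i * cs.simple j) k, mul_inv_rev, hginv]
      group
    · show (if (cs.simple j * ((cs.simple i * cs.simple j) ^ k * t *
            ((cs.simple i * cs.simple j) ^ k)⁻¹) * cs.simple j = cs.simple i) then
          -(if ((cs.simple i * cs.simple j) ^ k * t * ((cs.simple i * cs.simple j) ^ k)⁻¹
              = cs.simple j) then -(ε * _) else (ε * _))
          else (if ((cs.simple i * cs.simple j) ^ k * t * ((cs.simple i * cs.simple j) ^ k)⁻¹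
              = cs.simple j) then -(ε * _) else (ε * _))) = _
      rw [Finset.prod_range_succ]
      simp only [IF1, IF2]
      split_ifs with hc1 hc2 hc2 <;> simp [mul_assoc]
end part2b

section part2c
variable {B : Type*} {W : Type*} [Group W] [DecidableEq W] {M : CoxeterMatrix B}
  (cs : CoxeterSystem M W)

private lemma phi_liftable : M.IsLiftable (phi cs) := by
  intro i j
  apply Equiv.ext
  rintro ⟨t, ε⟩
  rw [phi_mul_pow, cs.simple_mul_simple_pow i j]
  simp only [one_mul, inv_one, mul_one, Equiv.Perm.one_apply]
  refine Prod.ext rfl ?_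
  show ε * _ = ε
  rw [Finset.prod_mul_distrib, Finset.prod_ite, Finset.prod_ite]
  simp only [Finset.prod_const, one_pow, mul_one]
  rw [← pow_add]
  rw [Even.neg_one_pow (even_counts (cs.simple j * cs.simple i) (cs.simple j) (M i j)
    (cs.simple_mul_simple_pow' i j) t), mul_one]

private def theta : W →* Equiv.Perm (W × ℤˣ) := cs.lift ⟨phi cs, phi_liftable cs⟩

private lemma theta_simple (i : B) : theta cs (cs.simple i) = phi cs i :=
  cs.lift_apply_simple (phi_liftable cs) i

private def signList (t : W) (l : List W) : ℤˣ :=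
  (l.map (fun u => if t = u then (-1 : ℤˣ) else 1)).prod

private lemma signList_nil (t : W) : signList t [] = 1 := rfl

private lemma signList_cons (t c : W) (l : List W) :
    signList t (c :: l) = (if t = c then (-1 : ℤˣ) else 1) * signList t l := by
  simp [signList]

private lemma signList_eq_one_of_not_mem {t : W} {l : List W} (h : t ∉ l) :
    signList t l = 1 := by
  apply List.prod_eq_one
  intro x hx
  simp only [List.mem_map] at hx
  obtain ⟨u, hu, rfl⟩ := hx
  rw [if_neg (fun e => h (by rw [e]; exact hu))]

private lemma theta_wordProd (ω : List B) (t : W) (ε : ℤˣ) :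
    theta cs (cs.wordProd ω) (t, ε) =
      (cs.wordProd ω * t * (cs.wordProd ω)⁻¹, ε * signList t (cs.rightInvSeq ω)) := by
  induction ω with
  | nil =>
    rw [cs.wordProd_nil, map_one]
    simp [signList_nil]
  | cons a ω ih =>
    rw [cs.wordProd_cons, map_mul, theta_simple, Equiv.Perm.mul_apply, ih, phi_apply]
    have hris : cs.rightInvSeq (a :: ω)
        = ((cs.wordProd ω)⁻¹ * cs.simple a * cs.wordProd ω) :: cs.rightInvSeq ω := rfl
    rw [hris, signList_cons]
    simp only [phiFun]
    refine Prod.ext ?_ ?_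
    · show cs.simple a * (cs.wordProd ω * t * (cs.wordProd ω)⁻¹) * cs.simple a = _
      rw [mul_inv_rev, cs.inv_simple]
      group
    · show (if cs.wordProd ω * t * (cs.wordProd ω)⁻¹ = cs.simple a then
          -(ε * signList t (cs.rightInvSeq ω)) else ε * signList t (cs.rightInvSeq ω))
        = ε * ((if t = (cs.wordProd ω)⁻¹ * cs.simple a * cs.wordProd ω then (-1 : ℤˣ) else 1)
            * signList t (cs.rightInvSeq ω))
      have hiff : (cs.wordProd ω * t * (cs.wordProd ω)⁻¹ = cs.simple a)
          ↔ (t = (cs.wordProd ω)⁻¹ * cs.simple a * cs.wordProd ω) := conj_eq_iff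
      by_cases hC : t = (cs.wordProd ω)⁻¹ * cs.simple a * cs.wordProd ω
      · rw [if_pos (hiff.mpr hC), if_pos hC]
        simp [mul_assoc]
      · rw [if_neg (fun hh => hC (hiff.mp hh)), if_neg hC]
        simp [mul_assoc]

private lemma exchange (ω : List B) (i : B)
    (hlt : cs.length (cs.simple i * cs.wordProd ω) < cs.length (cs.wordProd ω)) :
    ∃ k, k < ω.length ∧ cs.simple i * cs.wordProd ω = cs.wordProd (ω.eraseIdx k) := by
  obtain ⟨ω', hlen', hprod'⟩ := cs.exists_reduced_word (cs.simple i * cs.wordProd ω)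
  set w := cs.wordProd ω with hw
  set t₀ := w⁻¹ * cs.simple i * w with ht₀
  have hcons : cs.wordProd (i :: ω') = w := by
    rw [cs.wordProd_cons, ← hprod', cs.simple_mul_simple_cancel_left]
  have h1 := theta_wordProd cs ω t₀ 1
  have h2 := theta_wordProd cs (i :: ω') t₀ 1
  rw [hcons] at h2
  have hsign : signList t₀ (cs.rightInvSeq ω) = signList t₀ (cs.rightInvSeq (i :: ω')) := by
    have hh := congrArg Prod.snd (h1.symm.trans h2)
    simpa using hh
  have hris : cs.rightInvSeq (i :: ω')
      = ((cs.wordProd ω')⁻¹ * cs.simple i * cs.wordProd ω') :: cs.rightInvSeq ω' := rfl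
  have hhead : (cs.wordProd ω')⁻¹ * cs.simple i * cs.wordProd ω' = t₀ := by
    rw [← hprod', ht₀]
    simp [mul_assoc]
  have hnotmem : t₀ ∉ cs.rightInvSeq ω' := by
    intro hmem
    have hred : cs.IsReduced ω' := by
      exact hlen'
    have hinv := (cs.isRightInversion_of_mem_rightInvSeq hred hmem).2
    have hpt : cs.wordProd ω' * t₀ = w := by
      rw [← hprod', ht₀]
      simp [mul_assoc]
    rw [hpt, ← hprod'] at hinv
    omega
  have hsign' : signList t₀ (cs.rightInvSeq ω) = -1 := by
    rw [hsign, hris, signList_cons, hhead, if_pos rfl, signList_eq_one_of_not_mem hnotmem,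
      mul_one]
  have hmem : t₀ ∈ cs.rightInvSeq ω := by
    by_contra hnm
    rw [signList_eq_one_of_not_mem hnm] at hsign'
    exact absurd hsign' (by decide)
  obtain ⟨k, hk, hkeq⟩ := List.mem_iff_getElem.mp hmem
  have hklen : k < ω.length := by
    have := cs.length_rightInvSeq ω
    omega
  refine ⟨k, hklen, ?_⟩
  have hgd := cs.wordProd_mul_getD_rightInvSeq ω k
  rw [List.getD_eq_getElem _ _ hk, hkeq] at hgd
  rw [← hgd, hw, ht₀]
  simp [hw, mul_assoc]
end part2c

section part3
variable {B : Type*} {W : Type*} [Group W] [DecidableEq W] {M : CoxeterMatrix B}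
  (cs : CoxeterSystem M W)

private lemma eraseIdx_append_left {α : Type*} :
    ∀ (l₁ l₂ : List α) (k : ℕ), k < l₁.length →
      (l₁ ++ l₂).eraseIdx k = l₁.eraseIdx k ++ l₂ := by
  intro l₁
  induction l₁ with
  | nil => intro l₂ k hk; simp at hk
  | cons a l₁ ih =>
    intro l₂ k hk
    cases k with
    | zero => simp
    | succ k =>
      simp only [List.cons_append, List.eraseIdx_cons_succ]
      rw [ih l₂ k (by simpa using hk)]

private lemma eraseIdx_append_right {α : Type*} :
    ∀ (l₁ l₂ : List α) (k : ℕ), l₁.length ≤ k →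
      (l₁ ++ l₂).eraseIdx k = l₁ ++ l₂.eraseIdx (k - l₁.length) := by
  intro l₁
  induction l₁ with
  | nil => intro l₂ k _; simp
  | cons a l₁ ih =>
    intro l₂ k hk
    cases k with
    | zero => simp at hk
    | succ k =>
      simp only [List.cons_append, List.eraseIdx_cons_succ, List.length_cons]
      rw [ih l₂ k (by simpa using hk)]
      simp

private lemma T2 (y : W) (i j : B)
    (h1 : cs.length (cs.simple i * y) = cs.length y + 1)
    (h2 : cs.length (y * cs.simple j) = cs.length y + 1)
    (h3 : cs.length (cs.simple i * (y * cs.simple j)) = cs.length y) :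
    cs.simple i * y = y * cs.simple j := by
  obtain ⟨ω, hlen, hprod⟩ := cs.exists_reduced_word y
  have hlen : cs.length y = ω.length := by rw [hprod]; exact hlen
  have hprod2 : cs.wordProd (ω ++ [j]) = y * cs.simple j := by
    rw [cs.wordProd_append, cs.wordProd_singleton, ← hprod]
  have hlt : cs.length (cs.simple i * cs.wordProd (ω ++ [j]))
      < cs.length (cs.wordProd (ω ++ [j])) := by
    rw [hprod2, h2, h3]; omega
  obtain ⟨k, hk, heq⟩ := exchange cs (ω ++ [j]) i hlt
  rw [hprod2] at heq
  rw [List.length_append, List.length_singleton] at hk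
  rcases lt_or_ge k ω.length with hk' | hk'
  · exfalso
    rw [eraseIdx_append_left _ _ _ hk', cs.wordProd_append, cs.wordProd_singleton] at heq
    have heq' : (cs.simple i * y) * cs.simple j = cs.wordProd (ω.eraseIdx k) * cs.simple j := by
      rw [← heq]; group
    have hcan := mul_right_cancel heq'
    have hle := cs.length_wordProd_le (ω.eraseIdx k)
    have hlen' : (ω.eraseIdx k).length + 1 = ω.length := List.length_eraseIdx_add_one hk'
    rw [← hcan] at hle
    omega
  · have hkeq : k = ω.length := by omega
    subst hkeq
    rw [eraseIdx_append_right _ _ _ (le_refl _), Nat.sub_self,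
      show ([j] : List B).eraseIdx 0 = [] from rfl, List.append_nil, ← hprod] at heq
    calc cs.simple i * y = cs.simple i * (y * cs.simple j) * cs.simple j := by
          rw [mul_assoc, mul_assoc, cs.simple_mul_simple_self, mul_one]
      _ = y * cs.simple j := by rw [heq]

private lemma T1 (u v : W) (i : B)
    (h1 : cs.length (cs.simple i * u) = cs.length u + 1)
    (h2 : cs.length v = cs.length u + cs.length (u⁻¹ * v))
    (h3 : cs.length (cs.simple i * v) < cs.length v) :
    cs.length (u⁻¹ * (cs.simple i * v)) + 1 = cs.length (u⁻¹ * v) := by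
  obtain ⟨ω₁, hl1, hp1⟩ := cs.exists_reduced_word u
  obtain ⟨ω₂, hl2, hp2⟩ := cs.exists_reduced_word (u⁻¹ * v)
  have hl1 : cs.length u = ω₁.length := by rw [hp1]; exact hl1
  have hl2 : cs.length (u⁻¹ * v) = ω₂.length := by rw [hp2]; exact hl2
  have hp : cs.wordProd (ω₁ ++ ω₂) = v := by
    rw [cs.wordProd_append, ← hp1, ← hp2, mul_inv_cancel_left]
  obtain ⟨k, hk, heq⟩ := exchange cs (ω₁ ++ ω₂) i (by rw [hp]; exact h3)
  rw [hp] at heq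
  rw [List.length_append] at hk
  rcases lt_or_ge k ω₁.length with hk' | hk'
  · exfalso
    rw [eraseIdx_append_left _ _ _ hk', cs.wordProd_append, ← hp2] at heq
    have heq' : (cs.simple i * u) * (u⁻¹ * v)
        = cs.wordProd (ω₁.eraseIdx k) * (u⁻¹ * v) := by
      rw [← heq]
      simp [mul_assoc]
    have hcan := mul_right_cancel heq'
    have hle := cs.length_wordProd_le (ω₁.eraseIdx k)
    have hlen' : (ω₁.eraseIdx k).length + 1 = ω₁.length := List.length_eraseIdx_add_one hk'
    rw [← hcan] at hle
    omega
  · have hk2 : k - ω₁.length < ω₂.length := by omega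
    rw [eraseIdx_append_right _ _ _ hk', cs.wordProd_append, ← hp1] at heq
    have hveq : u⁻¹ * (cs.simple i * v) = cs.wordProd (ω₂.eraseIdx (k - ω₁.length)) := by
      rw [heq]
      simp [mul_assoc]
    have hle : cs.length (u⁻¹ * (cs.simple i * v))
        ≤ (ω₂.eraseIdx (k - ω₁.length)).length := by
      rw [hveq]; exact cs.length_wordProd_le _
    have hlen' : (ω₂.eraseIdx (k - ω₁.length)).length + 1 = ω₂.length :=
      List.length_eraseIdx_add_one hk2
    have hup : cs.length (cs.simple i * v)
        ≤ cs.length u + cs.length (u⁻¹ * (cs.simple i * v)) := by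
      have hh := cs.length_mul_le u (u⁻¹ * (cs.simple i * v))
      rw [mul_inv_cancel_left] at hh
      exact hh
    rcases cs.length_simple_mul v i with hdich | hdich
    · omega
    · omega

private lemma T1R (u v : W) (j : B)
    (h1 : cs.length (u * cs.simple j) = cs.length u + 1)
    (h2 : cs.length v = cs.length (v * u⁻¹) + cs.length u)
    (h3 : cs.length (v * cs.simple j) < cs.length v) :
    cs.length (v * cs.simple j * u⁻¹) + 1 = cs.length (v * u⁻¹) := by
  have e1 : cs.simple j * u⁻¹ = (u * cs.simple j)⁻¹ := by
    rw [mul_inv_rev, cs.inv_simple]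
  have h1' : cs.length (cs.simple j * u⁻¹) = cs.length u⁻¹ + 1 := by
    rw [e1, cs.length_inv, cs.length_inv, h1]
  have e2 : (u⁻¹)⁻¹ * v⁻¹ = (v * u⁻¹)⁻¹ := by
    rw [mul_inv_rev, inv_inv]
  have h2' : cs.length v⁻¹ = cs.length u⁻¹ + cs.length ((u⁻¹)⁻¹ * v⁻¹) := by
    rw [e2, cs.length_inv, cs.length_inv, cs.length_inv, h2]
    omega
  have h3' : cs.length (cs.simple j * v⁻¹) < cs.length v⁻¹ := by
    rw [show cs.simple j * v⁻¹ = (v * cs.simple j)⁻¹ by rw [mul_inv_rev, cs.inv_simple],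
      cs.length_inv, cs.length_inv]
    exact h3
  have hres := T1 cs u⁻¹ v⁻¹ j h1' h2' h3'
  rw [show (u⁻¹)⁻¹ * (cs.simple j * v⁻¹) = (v * cs.simple j * u⁻¹)⁻¹ by
      rw [mul_inv_rev, mul_inv_rev, cs.inv_simple],
    e2, cs.length_inv, cs.length_inv] at hres
  exact hres

end part3

section part4
variable {B : Type*} {W : Type*} [Group W] {M : CoxeterMatrix B} (cs : CoxeterSystem M W)

private lemma R1 (d : W → W → W)
    (hd_assoc : ∀ u v w : W, d (d u v) w = d u (d v w))
    (hd_one_left : ∀ w : W, d 1 w = w)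
    (hd_simple_lt : ∀ (i : B) (w : W), cs.length (cs.simple i * w) = cs.length w + 1 →
      d (cs.simple i) w = cs.simple i * w)
    (hd_simple_gt : ∀ (i : B) (w : W), cs.length (cs.simple i * w) + 1 = cs.length w →
      d (cs.simple i) w = w) :
    ∀ (x : W) (j : B),
      (cs.length (x * cs.simple j) = cs.length x + 1 → d x (cs.simple j) = x * cs.simple j) ∧
      (cs.length (x * cs.simple j) + 1 = cs.length x → d x (cs.simple j) = x) := by
  classical
  suffices H : ∀ (n : ℕ) (x : W), cs.length x = n → ∀ (j : B),
      (cs.length (x * cs.simple j) = cs.length x + 1 → d x (cs.simple j) = x * cs.simple j) ∧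
      (cs.length (x * cs.simple j) + 1 = cs.length x → d x (cs.simple j) = x) by
    exact fun x j => H (cs.length x) x rfl j
  intro n
  induction n using Nat.strong_induction_on with
  | _ n ih =>
  intro x hx j
  rcases eq_or_ne x 1 with rfl | hx1
  · constructor
    · intro _
      rw [hd_one_left, one_mul]
    · intro hcon
      rw [one_mul, cs.length_one, cs.length_simple] at hcon
      omega
  · obtain ⟨i, hi⟩ := cs.exists_leftDescent_of_ne_one hx1
    have hi' : cs.length (cs.simple i * x) < cs.length x := hi
    set y := cs.simple i * x with hy
    have hxy : x = cs.simple i * y := by rw [hy, cs.simple_mul_simple_cancel_left]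
    have hyx : cs.length y + 1 = cs.length x := by
      rcases cs.length_simple_mul x i with hh | hh
      · rw [← hy] at hh; omega
      · rw [← hy] at hh; exact hh
    have hsy : cs.length (cs.simple i * y) = cs.length y + 1 := by rw [← hxy]; omega
    have hdx : ∀ z, d x z = d (cs.simple i) (d y z) := by
      intro z
      rw [hxy, ← hd_simple_lt i y hsy, hd_assoc]
    have hIH := ih (cs.length y) (by omega) y rfl j
    rcases cs.length_mul_simple y j with hyj | hyj
    · have hdy : d y (cs.simple j) = y * cs.simple j := hIH.1 hyj
      have hxsj : x * cs.simple j = cs.simple i * (y * cs.simple j) := by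
        rw [hxy, mul_assoc]
      rcases cs.length_simple_mul (y * cs.simple j) i with hij | hij
      · have hres : d x (cs.simple j) = x * cs.simple j := by
          rw [hdx, hdy, hd_simple_lt i _ hij, ← hxsj]
        constructor
        · intro _; exact hres
        · intro hcon
          exfalso
          rw [hxsj] at hcon
          omega
      · have hT2 : cs.simple i * y = y * cs.simple j := by
          apply T2 cs y i j hsy hyj
          omega
        have hres : d x (cs.simple j) = x := by
          rw [hdx, hdy, hd_simple_gt i _ hij, ← hT2, ← hxy]
        constructor
        · intro hcon
          exfalso
          rw [hxsj] at hcon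
          omega
        · intro _; exact hres
    · have hdy : d y (cs.simple j) = y := hIH.2 hyj
      have hres : d x (cs.simple j) = x := by
        rw [hdx, hdy, hd_simple_lt i y hsy, ← hxy]
      have hub : cs.length (x * cs.simple j) ≤ cs.length y := by
        calc cs.length (x * cs.simple j) = cs.length (cs.simple i * (y * cs.simple j)) := by
              rw [hxy, mul_assoc]
          _ ≤ cs.length (cs.simple i) + cs.length (y * cs.simple j) := cs.length_mul_le _ _
          _ = cs.length (y * cs.simple j) + 1 := by rw [cs.length_simple]; omega
          _ = cs.length y := hyj
      constructor
      · intro hcon; exfalso; omega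
      · intro _; exact hres

private lemma R2 (d : W → W → W)
    (hd_assoc : ∀ u v w : W, d (d u v) w = d u (d v w))
    (hd_one_left : ∀ w : W, d 1 w = w)
    (hd_simple_lt : ∀ (i : B) (w : W), cs.length (cs.simple i * w) = cs.length w + 1 →
      d (cs.simple i) w = cs.simple i * w)
    (hd_simple_gt : ∀ (i : B) (w : W), cs.length (cs.simple i * w) + 1 = cs.length w →
      d (cs.simple i) w = w) :
    ∀ (w w' : W), cs.length (d w w') = cs.length w + cs.length (w⁻¹ * d w w') := by
  classical
  suffices H : ∀ (n : ℕ) (w : W), cs.length w = n → ∀ (w' : W),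
      cs.length (d w w') = cs.length w + cs.length (w⁻¹ * d w w') by
    exact fun w w' => H (cs.length w) w rfl w'
  intro n
  induction n using Nat.strong_induction_on with
  | _ n ih =>
  intro w hw w'
  rcases eq_or_ne w 1 with rfl | hw1
  · rw [hd_one_left, cs.length_one, inv_one, one_mul, Nat.zero_add]
  · obtain ⟨i, hi⟩ := cs.exists_leftDescent_of_ne_one hw1
    have hi' : cs.length (cs.simple i * w) < cs.length w := hi
    set y := cs.simple i * w with hy
    have hxy : w = cs.simple i * y := by rw [hy, cs.simple_mul_simple_cancel_left]
    have hyx : cs.length y + 1 = cs.length w := by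
      rcases cs.length_simple_mul w i with hh | hh
      · rw [← hy] at hh; omega
      · rw [← hy] at hh; exact hh
    have hsy : cs.length (cs.simple i * y) = cs.length y + 1 := by rw [← hxy]; omega
    have hdx : d w w' = d (cs.simple i) (d y w') := by
      rw [hxy, ← hd_simple_lt i y hsy, hd_assoc]
    have hIH : cs.length (d y w') = cs.length y + cs.length (y⁻¹ * d y w') :=
      ih (cs.length y) (by omega) y rfl w'
    set v := d y w' with hv
    rcases cs.length_simple_mul v i with hvi | hvi
    · have hdv : d w w' = cs.simple i * v := by rw [hdx, hd_simple_lt i v hvi]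
      rw [hdv]
      have hwiv : w⁻¹ * (cs.simple i * v) = y⁻¹ * v := by
        rw [hxy]
        simp [mul_inv_rev, mul_assoc]
      rw [hwiv, hvi]
      omega
    · have hdv : d w w' = v := by rw [hdx, hd_simple_gt i v hvi]
      rw [hdv]
      have hT1 := T1 cs y v i hsy hIH (by omega)
      have hwv : w⁻¹ * v = y⁻¹ * (cs.simple i * v) := by
        rw [hxy]
        simp [mul_inv_rev, mul_assoc]
      rw [hwv]
      omega

private lemma R3 (d : W → W → W)
    (hd_assoc : ∀ u v w : W, d (d u v) w = d u (d v w))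
    (hd_one_left : ∀ w : W, d 1 w = w)
    (hd_one_right : ∀ w : W, d w 1 = w)
    (hd_simple_lt : ∀ (i : B) (w : W), cs.length (cs.simple i * w) = cs.length w + 1 →
      d (cs.simple i) w = cs.simple i * w)
    (hd_simple_gt : ∀ (i : B) (w : W), cs.length (cs.simple i * w) + 1 = cs.length w →
      d (cs.simple i) w = w) :
    ∀ (w' w : W), cs.length (d w w') = cs.length (d w w' * w'⁻¹) + cs.length w' := by
  classical
  have hR1 := R1 cs d hd_assoc hd_one_left hd_simple_lt hd_simple_gt
  suffices H : ∀ (n : ℕ) (w' : W), cs.length w' = n → ∀ (w : W),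
      cs.length (d w w') = cs.length (d w w' * w'⁻¹) + cs.length w' by
    exact fun w' w => H (cs.length w') w' rfl w
  intro n
  induction n using Nat.strong_induction_on with
  | _ n ih =>
  intro w' hw' w
  rcases eq_or_ne w' 1 with rfl | hw'1
  · rw [hd_one_right, cs.length_one, inv_one, mul_one, Nat.add_zero]
  · obtain ⟨j, hj⟩ := cs.exists_rightDescent_of_ne_one hw'1
    have hj' : cs.length (w' * cs.simple j) < cs.length w' := hj
    set z := w' * cs.simple j with hz
    have hw'z : w' = z * cs.simple j := by rw [hz, cs.simple_mul_simple_cancel_right]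
    have hzw : cs.length z + 1 = cs.length w' := by
      rcases cs.length_mul_simple w' j with hh | hh
      · rw [← hz] at hh; omega
      · rw [← hz] at hh; exact hh
    have hzj : cs.length (z * cs.simple j) = cs.length z + 1 := by rw [← hw'z]; omega
    have hdz : d z (cs.simple j) = z * cs.simple j := (hR1 z j).1 hzj
    have hdw : d w w' = d (d w z) (cs.simple j) := by
      rw [hw'z, ← hdz, ← hd_assoc]
    set v := d w z with hv
    have hIH : cs.length v = cs.length (v * z⁻¹) + cs.length z :=
      ih (cs.length z) (by omega) z rfl w
    rcases cs.length_mul_simple v j with hvj | hvj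
    · have hdvj : d v (cs.simple j) = v * cs.simple j := (hR1 v j).1 hvj
      rw [hdw, hdvj]
      have he : v * cs.simple j * w'⁻¹ = v * z⁻¹ := by
        rw [hw'z]
        simp [mul_inv_rev, mul_assoc]
      rw [he, hvj]
      omega
    · have hdvj : d v (cs.simple j) = v := (hR1 v j).2 hvj
      rw [hdw, hdvj]
      have hT := T1R cs z v j hzj hIH (by omega)
      have he : v * w'⁻¹ = v * cs.simple j * z⁻¹ := by
        rw [hw'z]
        simp [mul_inv_rev, mul_assoc]
      rw [he]
      omega

end part4

/-- For all `w, w'` in `W`, `w` is an initial segment of the Demazure product `w • w'`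
(i.e. `ℓ(w • w') = ℓ(w) + ℓ(w⁻¹ * (w • w'))`) and `w'` is a final segment of `w • w'`
(i.e. `ℓ(w • w') = ℓ((w • w') * w'⁻¹) + ℓ(w')`). -/
theorem demazure_initial_final_segment
    {B : Type*} [Finite B] {W : Type*} [Group W] {M : CoxeterMatrix B}
    (cs : CoxeterSystem M W)
    (d : W → W → W)
    (hd_assoc : ∀ u v w : W, d (d u v) w = d u (d v w))
    (hd_one_left : ∀ w : W, d 1 w = w)
    (hd_one_right : ∀ w : W, d w 1 = w)
    (hd_simple_lt : ∀ (i : B) (w : W), cs.length (cs.simple i * w) = cs.length w + 1 →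
      d (cs.simple i) w = cs.simple i * w)
    (hd_simple_gt : ∀ (i : B) (w : W), cs.length (cs.simple i * w) + 1 = cs.length w →
      d (cs.simple i) w = w) :
    ∀ w w' : W,
      cs.length (d w w') = cs.length w + cs.length (w⁻¹ * d w w') ∧
      cs.length (d w w') = cs.length (d w w' * w'⁻¹) + cs.length w' := by
  intro w w'
  exact ⟨R2 cs d hd_assoc hd_one_left hd_simple_lt hd_simple_gt w w',
    R3 cs d hd_assoc hd_one_left hd_one_right hd_simple_lt hd_simple_gt w' w⟩
end

section
/- For every w ∈ ^JW, the element w • (w*)⁻¹ lies in I_* ∩ ^JW^{J*}. -/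
open CoxeterSystem List

namespace DemazureAux

variable {B : Type*} {W : Type*} [Group W] {M : CoxeterMatrix B} (cs : CoxeterSystem M W)

local prefix:100 "σ" => cs.simple
local prefix:100 "π" => cs.wordProd
local prefix:100 "ℓ" => cs.length

/-- The sign group. -/
abbrev SGrp (W : Type*) := W → Multiplicative (ZMod 2)

open Classical in
noncomputable def delta (t : W) : SGrp W := fun x => if x = t then Multiplicative.ofAdd 1 else 1

def conjMulEquiv (u : W) : SGrp W ≃* SGrp W where
  toFun a := fun t => a (u⁻¹ * t * u)
  invFun a := fun t => a (u * t * u⁻¹)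
  left_inv a := by funext t; exact congrArg a (by group)
  right_inv a := by funext t; exact congrArg a (by group)
  map_mul' a b := rfl

def phiW (W : Type*) [Group W] : W →* MulAut (SGrp W) where
  toFun u := conjMulEquiv u
  map_one' := by
    apply MulEquiv.ext; intro a; funext t
    exact congrArg a (by group)
  map_mul' u v := by
    apply MulEquiv.ext; intro a; funext t
    exact congrArg a (by group)

lemma phiW_apply (u : W) (a : SGrp W) (t : W) : phiW W u a t = a (u⁻¹ * t * u) := rfl

lemma phiW_delta (u t : W) : phiW W u (delta t) = delta (u * t * u⁻¹) := by
  classical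
  funext x
  show (if u⁻¹ * x * u = t then _ else _) = (if x = u * t * u⁻¹ then _ else _)
  apply if_congr _ rfl rfl
  constructor
  · intro h; rw [← h]; group
  · intro h; rw [h]; group

omit [Group W] in
lemma sgrp_sq (x : SGrp W) : x * x = 1 := by
  funext t
  show x t * x t = 1
  have : ∀ y : Multiplicative (ZMod 2), y * y = 1 := by decide
  exact this (x t)

lemma sdp_pow (n : SGrp W) (p : W) (k : ℕ) :
    (⟨n, p⟩ : SGrp W ⋊[phiW W] W) ^ k
      = ⟨∏ r ∈ Finset.range k, phiW W (p ^ r) n, p ^ k⟩ := by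
  induction k with
  | zero => simp
  | succ k ih =>
    rw [pow_succ, ih]
    ext
    · rw [SemidirectProduct.mul_left, Finset.prod_range_succ]
    · rw [SemidirectProduct.mul_right, pow_succ]

omit [Group W] in
lemma pair_prod {N : Type*} [CommMonoid N] (g : ℕ → N) (m : ℕ) :
    ∏ r ∈ Finset.range m, (g (2*r) * g (2*r+1)) = ∏ q ∈ Finset.range (2*m), g q := by
  induction m with
  | zero => simp
  | succ m ih =>
    rw [Finset.prod_range_succ, ih, show 2*(m+1) = (2*m+1)+1 by omega,
      Finset.prod_range_succ, Finset.prod_range_succ, mul_assoc]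

lemma liftable : M.IsLiftable (fun i => (⟨delta (σ i), σ i⟩ : SGrp W ⋊[phiW W] W)) := by
  intro i j
  set p : W := σ i * σ j with hp_def
  have hp : p ^ M i j = 1 := cs.simple_mul_simple_pow i j
  have hmul : ((⟨delta (σ i), σ i⟩ : SGrp W ⋊[phiW W] W) * ⟨delta (σ j), σ j⟩)
      = ⟨delta (σ i) * phiW W (σ i) (delta (σ j)), p⟩ := by
    ext <;> rfl
  rw [hmul, sdp_pow]
  have hA : ∀ q : ℕ, σ i * p ^ q * σ i = (p ^ q)⁻¹ := by
    intro q
    induction q with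
    | zero => simp
    | succ q ihq =>
      have h1 : σ i * p ^ (q+1) * σ i = (σ i * p ^ q * σ i) * (σ i * p * σ i) := by
        rw [pow_succ]
        simp [hp_def, mul_assoc, cs.simple_mul_simple_cancel_left]
      have h2 : σ i * p * σ i = p⁻¹ := by
        rw [hp_def]
        simp [mul_inv_rev, cs.inv_simple, mul_assoc, cs.simple_mul_simple_cancel_left]
      rw [h1, ihq, h2, pow_succ']
      exact (mul_inv_rev p (p ^ q)).symm
  have hC : ∀ q : ℕ, p ^ q * σ i = σ i * (p ^ q)⁻¹ := by
    intro q
    calc p ^ q * σ i = σ i * (σ i * p ^ q * σ i) := by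
          rw [← mul_assoc, ← mul_assoc, cs.simple_mul_simple_self, one_mul]
      _ = σ i * (p ^ q)⁻¹ := by rw [hA]
  have key : ∀ r : ℕ, phiW W (p ^ r) (delta (σ i) * phiW W (σ i) (delta (σ j)))
      = delta (σ i * (p ^ (2*r))⁻¹) * delta (σ i * (p ^ (2*r+1))⁻¹) := by
    intro r
    rw [phiW_delta, map_mul, phiW_delta, phiW_delta]
    congr 1
    · congr 1
      rw [hC, mul_assoc, ← mul_inv_rev, ← pow_add, two_mul]
    · congr 1
      have h3 : σ i * σ j * (σ i)⁻¹ = p * σ i := by rw [cs.inv_simple, hp_def]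
      rw [h3, ← mul_assoc, ← pow_succ, hC, mul_assoc, ← mul_inv_rev, ← pow_add, two_mul,
        show r + (r + 1) = r + r + 1 from by omega]
  have hleft : (∏ r ∈ Finset.range (M i j),
      phiW W (p ^ r) (delta (σ i) * phiW W (σ i) (delta (σ j)))) = 1 := by
    rw [Finset.prod_congr rfl (fun r _ => key r),
      pair_prod (fun q => delta (σ i * (p ^ q)⁻¹)) (M i j), two_mul,
      Finset.prod_range_add]
    have hQ : ∀ x : ℕ, delta (σ i * (p ^ (M i j + x))⁻¹) = delta (σ i * (p ^ x)⁻¹) := by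
      intro x
      rw [pow_add, hp, one_mul]
    rw [Finset.prod_congr rfl (fun x _ => hQ x)]
    exact sgrp_sq _
  rw [hleft, hp]
  rfl

noncomputable def rho : W →* SGrp W ⋊[phiW W] W :=
  cs.lift ⟨fun i => ⟨delta (σ i), σ i⟩, liftable cs⟩

lemma rho_simple (i : B) : rho cs (σ i) = ⟨delta (σ i), σ i⟩ :=
  cs.lift_apply_simple (liftable cs) i

lemma rho_right (w : W) : (rho cs w).right = w := by
  have h : (SemidirectProduct.rightHom.comp (rho cs)) = MonoidHom.id W := by
    apply cs.ext_simple
    intro i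
    rw [MonoidHom.comp_apply, rho_simple]
    rfl
  exact DFunLike.congr_fun h w

noncomputable def nf (w : W) : SGrp W := (rho cs w).left

lemma nf_simple_mul (i : B) (w : W) (t : W) :
    nf cs (σ i * w) t = delta (σ i) t * nf cs w (σ i * t * σ i) := by
  unfold nf
  rw [map_mul, SemidirectProduct.mul_left, rho_simple]
  show delta (σ i) t * phiW W (σ i) (nf cs w) t = _
  rw [phiW_apply, cs.inv_simple]
  rfl

lemma mem_lis_of_nf_ne_one (ω : List B) (t : W) (h : nf cs (π ω) t ≠ 1) :
    t ∈ cs.leftInvSeq ω := by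
  classical
  induction ω generalizing t with
  | nil =>
    exfalso
    apply h
    show (rho cs (π [])).left t = 1
    rw [cs.wordProd_nil, map_one, SemidirectProduct.one_left]
    rfl
  | cons i ω ih =>
    rw [cs.wordProd_cons] at h
    rw [nf_simple_mul] at h
    show t ∈ σ i :: List.map (⇑(MulAut.conj (σ i))) (cs.leftInvSeq ω)
    by_cases hti : t = σ i
    · rw [hti]; exact List.mem_cons_self
    · have hd : delta (σ i) t = 1 := by
        unfold delta
        simp [hti]
      rw [hd, one_mul] at h
      have hmem := ih _ h
      apply List.mem_cons_of_mem
      have : (MulAut.conj (σ i)) (σ i * t * σ i) = t := by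
        show σ i * (σ i * t * σ i) * (σ i)⁻¹ = t
        rw [cs.inv_simple]
        simp [mul_assoc, cs.simple_mul_simple_cancel_left, cs.simple_mul_simple_self,
          cs.simple_mul_simple_cancel_right]
      rw [← this]
      exact List.mem_map_of_mem hmem

lemma nf_ne_one_of_descent (i : B) (w : W) (h : ℓ (σ i * w) < ℓ w) :
    nf cs w (σ i) ≠ 1 := by
  intro heq
  have h2 : nf cs (σ i * w) (σ i) = Multiplicative.ofAdd 1 := by
    rw [nf_simple_mul]
    have hd : delta (σ i) (σ i) = Multiplicative.ofAdd 1 := by unfold delta; simp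
    have : σ i * σ i * σ i = σ i := by rw [cs.simple_mul_simple_self, one_mul]
    rw [hd, this, heq, mul_one]
  have hne : nf cs (σ i * w) (σ i) ≠ 1 := by
    rw [h2]; decide
  obtain ⟨ω', hlen, hw⟩ := cs.exists_reduced_word (σ i * w)
  have hred : cs.IsReduced ω' := by
    show ℓ (π ω') = ω'.length
    exact hlen
  have hmem := mem_lis_of_nf_ne_one cs ω' (σ i) (by rw [← hw]; exact hne)
  have hinv := cs.isLeftInversion_of_mem_leftInvSeq hred hmem
  have : ℓ (σ i * π ω') < ℓ (π ω') := hinv.2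
  rw [← hw, ← mul_assoc, cs.simple_mul_simple_self, one_mul] at this
  omega

/-- The (left) exchange property for simple reflections. -/
lemma simple_exchange (i : B) (ω : List B) (hred : cs.IsReduced ω)
    (h : ℓ (σ i * π ω) < ℓ (π ω)) :
    ∃ j < ω.length, σ i * π ω = π (ω.eraseIdx j) := by
  have hmem := mem_lis_of_nf_ne_one cs ω (σ i) (nf_ne_one_of_descent cs i (π ω) h)
  obtain ⟨j, hj, hget⟩ := List.mem_iff_getElem.mp hmem
  refine ⟨j, by rw [cs.length_leftInvSeq] at hj; exact hj, ?_⟩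
  have hgd : (cs.leftInvSeq ω).getD j 1 = σ i := by
    rw [List.getD_eq_getElem _ _ hj, hget]
  rw [← hgd]
  exact cs.getD_leftInvSeq_mul_wordProd ω j

/-! ### Lifting / parabolic lemmas -/

/-- Lifting property: if `a` is a prefix of `x`, `s i` is a left descent of `x` but not of `a`,
then `s i * a` is a prefix of `x`. -/
lemma prefix_lift (i : B) (a x : W) (hpre : ℓ x = ℓ a + ℓ (a⁻¹ * x))
    (hdesc : ℓ (σ i * x) < ℓ x) (hup : ℓ a < ℓ (σ i * a)) :
    ℓ x = ℓ (σ i * a) + ℓ ((σ i * a)⁻¹ * x) := by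
  have hia : ℓ (σ i * a) = ℓ a + 1 := by
    rcases cs.length_simple_mul a i with h | h
    · exact h
    · omega
  obtain ⟨α, hαlen, hαeq⟩ := cs.exists_reduced_word a
  obtain ⟨β, hβlen, hβeq⟩ := cs.exists_reduced_word (a⁻¹ * x)
  have hx : x = π (α ++ β) := by
    rw [cs.wordProd_append, ← hαeq, ← hβeq, mul_inv_cancel_left]
  have hxlen : ℓ x = (α ++ β).length := by
    rw [List.length_append, ← hαlen, ← hβlen, ← hαeq, ← hβeq, hpre]
  have hredαβ : cs.IsReduced (α ++ β) := by
    show ℓ (π (α ++ β)) = _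
    rw [← hx, hxlen]
  obtain ⟨j, hj, hjeq⟩ := simple_exchange cs i (α ++ β)
    hredαβ (by rw [← hx]; exact hdesc)
  rw [← hx] at hjeq
  rcases lt_or_ge j α.length with hjα | hjα
  · exfalso
    rw [List.eraseIdx_append_of_lt_length hjα, cs.wordProd_append] at hjeq
    have hia2 : σ i * a = π (α.eraseIdx j) := by
      have : σ i * x * (a⁻¹ * x)⁻¹ = σ i * a := by group
      rw [← this, hjeq, ← hβeq, mul_assoc, mul_inv_cancel, mul_one]
    have : ℓ (σ i * a) ≤ (α.eraseIdx j).length := by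
      rw [hia2]; exact cs.length_wordProd_le _
    have hel := List.length_eraseIdx_add_one hjα
    have hαl : ℓ a = α.length := by rw [hαeq]; exact hαlen
    omega
  · rw [List.eraseIdx_append_of_length_le hjα, cs.wordProd_append, ← hαeq] at hjeq
    have hj2 : j - α.length < β.length := by
      rw [List.length_append] at hj
      omega
    have hrest : (σ i * a)⁻¹ * x = π (β.eraseIdx (j - α.length)) := by
      rw [mul_inv_rev, cs.inv_simple, mul_assoc, hjeq, inv_mul_cancel_left]
    have h5 : ℓ ((σ i * a)⁻¹ * x) + 1 ≤ ℓ (a⁻¹ * x) := by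
      have hle := cs.length_wordProd_le (β.eraseIdx (j - α.length))
      rw [← hrest] at hle
      have hel := List.length_eraseIdx_add_one hj2
      have hβl : ℓ (a⁻¹ * x) = β.length := by rw [hβeq]; exact hβlen
      omega
    have h6 : ℓ x ≤ ℓ (σ i * a) + ℓ ((σ i * a)⁻¹ * x) := by
      have := cs.length_mul_le (σ i * a) ((σ i * a)⁻¹ * x)
      rwa [mul_inv_cancel_left] at this
    omega

lemma wordProd_mem_closure (J : Set B) (l : List B) (hl : ∀ b ∈ l, b ∈ J) :
    π l ∈ Subgroup.closure (cs.simple '' J) := by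
  induction l with
  | nil => rw [cs.wordProd_nil]; exact one_mem _
  | cons i l ih =>
    rw [cs.wordProd_cons]
    exact mul_mem (Subgroup.subset_closure ⟨i, hl i List.mem_cons_self, rfl⟩)
      (ih fun b hb => hl b (List.mem_cons_of_mem i hb))

lemma exists_word_of_mem_closure (J : Set B) (u : W)
    (hu : u ∈ Subgroup.closure (cs.simple '' J)) :
    ∃ l : List B, (∀ b ∈ l, b ∈ J) ∧ u = π l := by
  induction hu using Subgroup.closure_induction with
  | mem x hx =>
    obtain ⟨i, hi, rfl⟩ := hx
    exact ⟨[i], by simpa using hi, by simp [cs.wordProd_cons]⟩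
  | one => exact ⟨[], by simp, by simp⟩
  | mul x y _ _ hx hy =>
    obtain ⟨l₁, hl₁, rfl⟩ := hx
    obtain ⟨l₂, hl₂, rfl⟩ := hy
    exact ⟨l₁ ++ l₂, fun b hb => by
      rcases List.mem_append.mp hb with h | h
      exacts [hl₁ b h, hl₂ b h], (cs.wordProd_append l₁ l₂).symm⟩
  | inv x _ hx =>
    obtain ⟨l, hl, rfl⟩ := hx
    exact ⟨l.reverse, fun b hb => hl b (List.mem_reverse.mp hb),
      (cs.wordProd_reverse l).symm⟩

lemma exists_reduced_word_subset : ∀ (l : List B),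
    ∃ l' : List B, (∀ b ∈ l', b ∈ l) ∧ cs.IsReduced l' ∧ π l' = π l := by
  suffices h : ∀ (n : ℕ) (l : List B), l.length = n →
      ∃ l' : List B, (∀ b ∈ l', b ∈ l) ∧ cs.IsReduced l' ∧ π l' = π l by
    exact fun l => h l.length l rfl
  intro n
  induction n using Nat.strong_induction_on with
  | _ n ih =>
    intro l hlen
    rcases l with _ | ⟨i, t⟩
    · exact ⟨[], by simp, by simp [CoxeterSystem.IsReduced], rfl⟩
    · by_cases hred : cs.IsReduced (i :: t)
      · exact ⟨i :: t, fun b hb => hb, hred, rfl⟩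
      · by_cases hredt : cs.IsReduced t
        · -- ℓ (σ i * π t) < ℓ (π t)
          have hlt : ℓ (σ i * π t) < ℓ (π t) := by
            rcases cs.length_simple_mul (π t) i with h | h
            · exfalso
              apply hred
              show ℓ (π (i :: t)) = (i :: t).length
              rw [cs.wordProd_cons, h, hredt, List.length_cons]
            · omega
          obtain ⟨j, hj, hjeq⟩ := simple_exchange cs i t hredt hlt
          have hlen2 : (t.eraseIdx j).length < n := by
            have := List.length_eraseIdx_add_one hj
            simp only [List.length_cons] at hlen
            omega
          obtain ⟨l', hsub, hred', heq⟩ := ih _ hlen2 (t.eraseIdx j) rfl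
          refine ⟨l', fun b hb => List.mem_cons_of_mem i
            (List.eraseIdx_subset (hsub b hb)), hred', ?_⟩
          rw [heq, ← hjeq, cs.wordProd_cons]
        · have hlt : ℓ (π t) < t.length := by
            have := cs.length_wordProd_le t
            rcases this.lt_or_eq with h | h
            · exact h
            · exact absurd h hredt
          have hlen2 : t.length < n := by
            simp only [List.length_cons] at hlen; omega
          obtain ⟨l₂, hsub₂, hred₂, heq₂⟩ := ih _ hlen2 t rfl
          have hlen3 : (i :: l₂).length < n := by
            have : l₂.length = ℓ (π t) := by rw [← hred₂, heq₂]
            simp only [List.length_cons] at hlen ⊢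
            omega
          obtain ⟨l', hsub', hred', heq'⟩ := ih _ hlen3 (i :: l₂) rfl
          refine ⟨l', fun b hb => ?_, hred', ?_⟩
          · rcases List.mem_cons.mp (hsub' b hb) with h | h
            · exact h ▸ (List.mem_cons_self : i ∈ i :: t)
            · exact List.mem_cons_of_mem i (hsub₂ b h)
          · rw [heq', cs.wordProd_cons, cs.wordProd_cons, heq₂]

lemma exists_reduced_J_word (J : Set B) (u : W)
    (hu : u ∈ Subgroup.closure (cs.simple '' J)) :
    ∃ l : List B, (∀ b ∈ l, b ∈ J) ∧ cs.IsReduced l ∧ u = π l := by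
  obtain ⟨l, hl, rfl⟩ := exists_word_of_mem_closure cs J u hu
  obtain ⟨l', hsub, hred, heq⟩ := exists_reduced_word_subset cs l
  exact ⟨l', fun b hb => hl b (hsub b hb), hred, heq.symm⟩

/-- If every element of `J` is a left descent of `x`, then every element of the standard
parabolic subgroup generated by `J` is a prefix of `x`. -/
lemma prefix_of_descents (J : Set B) (x : W) (hx : ∀ i ∈ J, ℓ (σ i * x) < ℓ x) :
    ∀ u ∈ Subgroup.closure (cs.simple '' J), ℓ x = ℓ u + ℓ (u⁻¹ * x) := by
  suffices h : ∀ (n : ℕ) (u : W), u ∈ Subgroup.closure (cs.simple '' J) → ℓ u = n →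
      ℓ x = ℓ u + ℓ (u⁻¹ * x) by
    exact fun u hu => h (ℓ u) u hu rfl
  intro n
  induction n using Nat.strong_induction_on with
  | _ n ih =>
    intro u hu hlen
    obtain ⟨l, hlJ, hred, rfl⟩ := exists_reduced_J_word cs J u hu
    rcases l with _ | ⟨i, t⟩
    · simp
    · have hiJ : i ∈ J := hlJ i List.mem_cons_self
      have hredt : cs.IsReduced t := by
        have h1 : ℓ (π (i :: t)) = t.length + 1 := by
          rw [hred, List.length_cons]
        have h2 : ℓ (π t) ≤ t.length := cs.length_wordProd_le t
        have h3 : ℓ (π (i :: t)) ≤ ℓ (π t) + 1 := by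
          rw [cs.wordProd_cons]
          have := cs.length_mul_le (σ i) (π t)
          rw [cs.length_simple] at this
          omega
        show ℓ (π t) = t.length
        omega
      have htJ : π t ∈ Subgroup.closure (cs.simple '' J) :=
        wordProd_mem_closure cs J t (fun b hb => hlJ b (List.mem_cons_of_mem i hb))
      have hlt : ℓ (π t) < n := by
        rw [← hlen, hred, hredt, List.length_cons]
        omega
      have hpre := ih _ hlt (π t) htJ rfl
      have hup : ℓ (π t) < ℓ (σ i * π t) := by
        have : σ i * π t = π (i :: t) := (cs.wordProd_cons i t).symm
        rw [this, hred, hredt, List.length_cons]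
        omega
      have := prefix_lift cs i (π t) x hpre (hx i hiJ) hup
      rwa [← cs.wordProd_cons] at this

/-- If `ℓ (w) = ℓ (wJ) + ℓ (wJ * w)` where `wJ` has maximal length in the parabolic, then
every element of `J` is a left descent of `w`. -/
lemma descent_of_quot (J : Set B) (wJ : W) (hwJ_mem : wJ ∈ Subgroup.closure (cs.simple '' J))
    (hwJ_max : ∀ u ∈ Subgroup.closure (cs.simple '' J), ℓ u ≤ ℓ wJ)
    (w : W) (hw : ℓ w = ℓ wJ + ℓ (wJ * w)) (i : B) (hi : i ∈ J) :
    ℓ (σ i * w) < ℓ w := by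
  have hm1 : wJ * σ i ∈ Subgroup.closure (cs.simple '' J) :=
    mul_mem hwJ_mem (Subgroup.subset_closure ⟨i, hi, rfl⟩)
  have hm2 : ℓ (wJ * σ i) + 1 = ℓ wJ := by
    rcases cs.length_mul_simple wJ i with h | h
    · have := hwJ_max _ hm1
      omega
    · exact h
  have hkey : (wJ * σ i)⁻¹ * (wJ * w) = σ i * w := by
    rw [mul_inv_rev, cs.inv_simple]
    group
  have : ℓ (σ i * w) ≤ ℓ (wJ * σ i) + ℓ (wJ * w) := by
    have h := cs.length_mul_le ((wJ * σ i)⁻¹) (wJ * w)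
    rw [hkey, cs.length_inv] at h
    exact h
  omega

/-- The "tws = w" lemma: if `t w` and `w s` both go up and `t w s` goes down, then `t w s = w`. -/
lemma tws_eq (i k : B) (w : W)
    (h1 : ℓ (σ i * w) = ℓ w + 1) (h2 : ℓ (w * σ k) = ℓ w + 1)
    (h3 : ℓ (σ i * (w * σ k)) < ℓ (w * σ k)) :
    σ i * (w * σ k) = w := by
  obtain ⟨ω, hωlen, hωeq⟩ := cs.exists_reduced_word w
  have hπ : w * σ k = π (ω ++ [k]) := by
    rw [cs.wordProd_append, ← hωeq]
    congr 1
    rw [cs.wordProd_cons, cs.wordProd_nil, mul_one]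
  have hlen : (ω ++ [k]).length = ℓ (w * σ k) := by
    rw [List.length_append, List.length_singleton, ← hωlen, ← hωeq, h2]
  have hred : cs.IsReduced (ω ++ [k]) := by
    show ℓ (π (ω ++ [k])) = _
    rw [← hπ, hlen]
  obtain ⟨j, hj, hjeq⟩ := simple_exchange cs i (ω ++ [k]) hred (by rw [← hπ]; exact h3)
  rw [← hπ] at hjeq
  rcases lt_or_ge j ω.length with hjω | hjω
  · exfalso
    rw [List.eraseIdx_append_of_lt_length hjω, cs.wordProd_append] at hjeq
    have hcanc : σ i * w = π (ω.eraseIdx j) := by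
      have : σ i * (w * σ k) * (π [k])⁻¹ = σ i * w := by
        rw [cs.wordProd_cons, cs.wordProd_nil, mul_one, mul_assoc, mul_assoc,
          mul_inv_cancel, mul_one]
      rw [← this, hjeq, mul_assoc, mul_inv_cancel, mul_one]
    have := cs.length_wordProd_le (ω.eraseIdx j)
    rw [← hcanc] at this
    have hel := List.length_eraseIdx_add_one hjω
    have hωl : ℓ w = ω.length := by rw [hωeq]; exact hωlen
    omega
  · have hj0 : j - ω.length = 0 := by
      rw [List.length_append, List.length_singleton] at hj
      omega
    rw [List.eraseIdx_append_of_length_le hjω, hj0] at hjeq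
    simpa [cs.wordProd_append, ← hωeq] using hjeq

section Demazure

variable (d : W → W → W)
  (hd_assoc : ∀ u v w : W, d (d u v) w = d u (d v w))
  (hd_one_left : ∀ w : W, d 1 w = w)
  (hd_one_right : ∀ w : W, d w 1 = w)
  (hd_simple_lt : ∀ (i : B) (w : W), cs.length (cs.simple i * w) = cs.length w + 1 →
    d (cs.simple i) w = cs.simple i * w)
  (hd_simple_gt : ∀ (i : B) (w : W), cs.length (cs.simple i * w) + 1 = cs.length w →
    d (cs.simple i) w = w)

include cs hd_assoc hd_simple_lt in
lemma d_split (i : B) (u' v : W) (h : ℓ (σ i * u') = ℓ u' + 1) :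
    d (σ i * u') v = d (σ i) (d u' v) := by
  rw [← hd_simple_lt i u' h, hd_assoc]

lemma peel (w : W) (hw : w ≠ 1) :
    ∃ i w', w = σ i * w' ∧ ℓ w = ℓ w' + 1 := by
  obtain ⟨i, hi⟩ := cs.exists_leftDescent_of_ne_one hw
  have hi' : ℓ (σ i * w) < ℓ w := hi
  refine ⟨i, σ i * w, by rw [cs.simple_mul_simple_cancel_left], ?_⟩
  rcases cs.length_simple_mul w i with h | h
  · omega
  · omega

include cs hd_assoc hd_one_left hd_simple_lt hd_simple_gt in
/-- Left descents of `u` are left descents of `d u v`. -/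
lemma d_left_descent (i : B) (u v : W) (h : ℓ (σ i * u) < ℓ u) :
    ℓ (σ i * d u v) < ℓ (d u v) := by
  have hlen : ℓ (σ i * (σ i * u)) = ℓ (σ i * u) + 1 := by
    rw [cs.simple_mul_simple_cancel_left]
    rcases cs.length_simple_mul u i with h' | h'
    · omega
    · omega
  have hsplit : d u v = d (σ i) (d (σ i * u) v) := by
    conv_lhs => rw [show u = σ i * (σ i * u) from (cs.simple_mul_simple_cancel_left i).symm]
    rw [d_split cs d hd_assoc hd_simple_lt i (σ i * u) v hlen]
  rcases cs.length_simple_mul (d (σ i * u) v) i with h' | h'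
  · rw [hsplit, hd_simple_lt i _ h', ← mul_assoc, cs.simple_mul_simple_self, one_mul]
    omega
  · rw [hsplit, hd_simple_gt i _ h']
    omega

include cs hd_assoc hd_one_left hd_simple_lt hd_simple_gt in
/-- Multiplication rule of the Demazure product by a simple reflection on the right. -/
lemma d_simple_right : ∀ (x : W) (k : B),
    (ℓ (x * σ k) = ℓ x + 1 → d x (σ k) = x * σ k) ∧
    (ℓ (x * σ k) + 1 = ℓ x → d x (σ k) = x) := by
  suffices h : ∀ (n : ℕ) (x : W), ℓ x = n → ∀ (k : B),
      (ℓ (x * σ k) = ℓ x + 1 → d x (σ k) = x * σ k) ∧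
      (ℓ (x * σ k) + 1 = ℓ x → d x (σ k) = x) by
    exact fun x k => h (ℓ x) x rfl k
  intro n
  induction n using Nat.strong_induction_on with
  | _ n ih =>
    intro x hx k
    by_cases hx1 : x = 1
    · subst hx1
      constructor
      · intro _
        rw [hd_one_left, one_mul]
      · intro h
        rw [one_mul, cs.length_simple, cs.length_one] at h
        omega
    · obtain ⟨t, x', hxeq, hxlen⟩ := peel cs x hx1
      have hst : ℓ (σ t * x') = ℓ x' + 1 := by rw [← hxeq]; omega
      have hsplit : ∀ v, d x v = d (σ t) (d x' v) := fun v => by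
        rw [hxeq, d_split cs d hd_assoc hd_simple_lt t x' v hst]
      have hx'lt : ℓ x' < n := by omega
      have ihx' := ih (ℓ x') hx'lt x' rfl k
      constructor
      · intro h
        have hx'k : ℓ (x' * σ k) = ℓ x' + 1 := by
          rcases cs.length_mul_simple x' k with h' | h'
          · exact h'
          · exfalso
            have hb : ℓ (x * σ k) ≤ 1 + ℓ (x' * σ k) := by
              have := cs.length_mul_le (σ t) (x' * σ k)
              rw [cs.length_simple] at this
              rw [hxeq, mul_assoc]
              omega
            omega
        rw [hsplit, ihx'.1 hx'k]
        have hlast : ℓ (σ t * (x' * σ k)) = ℓ (x' * σ k) + 1 := by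
          rw [← mul_assoc, ← hxeq]
          omega
        rw [hd_simple_lt t _ hlast, ← mul_assoc, ← hxeq]
      · intro h
        rcases cs.length_mul_simple x' k with h' | h'
        · -- hard case
          rw [hsplit, ihx'.1 h']
          have hlast : ℓ (σ t * (x' * σ k)) + 1 = ℓ (x' * σ k) := by
            rw [← mul_assoc, ← hxeq]
            omega
          rw [hd_simple_gt t _ hlast]
          have htw := tws_eq cs t k x' hst h' (by omega)
          rw [← mul_assoc, ← hxeq] at htw
          rw [← htw, mul_assoc, cs.simple_mul_simple_self, mul_one]
        · rw [hsplit, ihx'.2 h']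
          rw [hd_simple_lt t x' hst, ← hxeq]

include cs hd_assoc hd_one_left hd_one_right hd_simple_lt hd_simple_gt in
/-- The Demazure product is an anti-homomorphism with respect to inversion. -/
lemma d_inv : ∀ u v : W, (d u v)⁻¹ = d v⁻¹ u⁻¹ := by
  suffices h : ∀ (n : ℕ) (u : W), ℓ u = n → ∀ v : W, (d u v)⁻¹ = d v⁻¹ u⁻¹ by
    exact fun u v => h (ℓ u) u rfl v
  intro n
  induction n using Nat.strong_induction_on with
  | _ n ih =>
    intro u hu v
    by_cases hu1 : u = 1
    · subst hu1
      rw [hd_one_left, inv_one, hd_one_right]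
    · obtain ⟨t, u', hueq, hulen⟩ := peel cs u hu1
      have hst : ℓ (σ t * u') = ℓ u' + 1 := by rw [← hueq]; omega
      have hsplit : d u v = d (σ t) (d u' v) := by
        rw [hueq, d_split cs d hd_assoc hd_simple_lt t u' v hst]
      have ihu' := ih (ℓ u') (by omega) u' rfl v
      have huinv : u⁻¹ = u'⁻¹ * σ t := by
        rw [hueq, mul_inv_rev, cs.inv_simple]
      have hd2 : d v⁻¹ u⁻¹ = d (d v⁻¹ u'⁻¹) (σ t) := by
        rw [huinv]
        have : d u'⁻¹ (σ t) = u'⁻¹ * σ t := by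
          apply (d_simple_right cs d hd_assoc hd_one_left hd_simple_lt hd_simple_gt u'⁻¹ t).1
          have : (u'⁻¹ * σ t)⁻¹ = σ t * u' := by rw [mul_inv_rev, cs.inv_simple, inv_inv]
          rw [← cs.length_inv, this, cs.length_inv u']
          exact hst
        rw [← this, hd_assoc]
      rcases cs.length_simple_mul (d u' v) t with h' | h'
      · rw [hsplit, hd_simple_lt t _ h', hd2, ← ihu']
        have hlen' : ℓ ((d u' v)⁻¹ * σ t) = ℓ ((d u' v)⁻¹) + 1 := by
          have he : ((d u' v)⁻¹ * σ t)⁻¹ = σ t * d u' v := by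
            rw [mul_inv_rev, cs.inv_simple, inv_inv]
          rw [← cs.length_inv ((d u' v)⁻¹ * σ t), he, cs.length_inv (d u' v)]
          exact h'
        have hr := (d_simple_right cs d hd_assoc hd_one_left hd_simple_lt hd_simple_gt
          (d u' v)⁻¹ t).1 hlen'
        rw [hr, mul_inv_rev, cs.inv_simple]
      · rw [hsplit, hd_simple_gt t _ h', hd2, ← ihu']
        have hlen' : ℓ ((d u' v)⁻¹ * σ t) + 1 = ℓ ((d u' v)⁻¹) := by
          have he : ((d u' v)⁻¹ * σ t)⁻¹ = σ t * d u' v := by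
            rw [mul_inv_rev, cs.inv_simple, inv_inv]
          rw [← cs.length_inv ((d u' v)⁻¹ * σ t), he, cs.length_inv (d u' v)]
          exact h'
        exact ((d_simple_right cs d hd_assoc hd_one_left hd_simple_lt hd_simple_gt
          (d u' v)⁻¹ t).2 hlen').symm

include cs hd_assoc hd_one_left hd_one_right hd_simple_lt hd_simple_gt in
/-- Right descents of `v` are right descents of `d u v`. -/
lemma d_right_descent (k : B) (u v : W) (h : ℓ (v * σ k) < ℓ v) :
    ℓ (d u v * σ k) < ℓ (d u v) := by
  have hinv := d_inv cs d hd_assoc hd_one_left hd_one_right hd_simple_lt hd_simple_gt u v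
  have h2 : ℓ (σ k * v⁻¹) < ℓ v⁻¹ := by
    have : (σ k * v⁻¹)⁻¹ = v * σ k := by rw [mul_inv_rev, cs.inv_simple, inv_inv]
    rw [← cs.length_inv (σ k * v⁻¹), this, cs.length_inv]
    exact h
  have h3 := d_left_descent cs d hd_assoc hd_one_left hd_simple_lt hd_simple_gt k v⁻¹ u⁻¹ h2
  have h4 : (d u v * σ k)⁻¹ = σ k * d v⁻¹ u⁻¹ := by
    rw [mul_inv_rev, cs.inv_simple, hinv]
  rw [← cs.length_inv (d u v * σ k), h4, ← cs.length_inv (d u v), hinv]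
  exact h3

include cs hd_assoc hd_one_left hd_simple_lt hd_simple_gt in
/-- The Demazure product commutes with a length-preserving automorphism
that permutes the simple reflections. -/
lemma d_f (f : W ≃* W) (τ : B → B) (hτ : ∀ i, f (σ i) = σ (τ i))
    (hflen : ∀ v : W, ℓ (f v) = ℓ v) :
    ∀ u v : W, f (d u v) = d (f u) (f v) := by
  suffices h : ∀ (n : ℕ) (u : W), ℓ u = n → ∀ v : W, f (d u v) = d (f u) (f v) by
    exact fun u v => h (ℓ u) u rfl v
  intro n
  induction n using Nat.strong_induction_on with
  | _ n ih =>
    intro u hu v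
    by_cases hu1 : u = 1
    · subst hu1
      rw [hd_one_left, map_one, hd_one_left]
    · obtain ⟨t, u', hueq, hulen⟩ := peel cs u hu1
      have hst : ℓ (σ t * u') = ℓ u' + 1 := by rw [← hueq]; omega
      have hsplit : d u v = d (σ t) (d u' v) := by
        rw [hueq, d_split cs d hd_assoc hd_simple_lt t u' v hst]
      have ihu' := ih (ℓ u') (by omega) u' rfl v
      have hfu : f u = σ (τ t) * f u' := by rw [hueq, map_mul, hτ]
      have hst' : ℓ (σ (τ t) * f u') = ℓ (f u') + 1 := by
        rw [← hτ, ← map_mul, hflen, hflen]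
        exact hst
      have hsplit' : d (f u) (f v) = d (σ (τ t)) (d (f u') (f v)) := by
        rw [hfu, d_split cs d hd_assoc hd_simple_lt (τ t) (f u') (f v) hst']
      rw [hsplit, hsplit', ← ihu']
      rcases cs.length_simple_mul (d u' v) t with h' | h'
      · rw [hd_simple_lt t _ h', map_mul, hτ]
        have : ℓ (σ (τ t) * f (d u' v)) = ℓ (f (d u' v)) + 1 := by
          rw [← hτ, ← map_mul, hflen, hflen]
          exact h'
        rw [hd_simple_lt (τ t) _ this]
      · rw [hd_simple_gt t _ h']
        have : ℓ (σ (τ t) * f (d u' v)) + 1 = ℓ (f (d u' v)) := by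
          rw [← hτ, ← map_mul, hflen, hflen]
          exact h'
        rw [hd_simple_gt (τ t) _ this]

end Demazure

end DemazureAux

/-- For every `w ∈ ᴶW` (i.e. `ℓ(w) = ℓ(w_J) + ℓ(w_J * w)`), the element `w • (w⋆)⁻¹`
lies in `I_* ∩ ᴶW^{J⋆}`: it is a twisted involution, lies in `ᴶW`, and lies in `W^{J⋆}`
(i.e. `ℓ(x) = ℓ(w_{J⋆}) + ℓ(x * w_{J⋆})`). -/
theorem demazure_pi_mem_twisted_involutions_inter
    {B : Type*} [Finite B] {W : Type*} [Group W] {M : CoxeterMatrix B}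
    (cs : CoxeterSystem M W)
    (d : W → W → W)
    (hd_assoc : ∀ u v w : W, d (d u v) w = d u (d v w))
    (hd_one_left : ∀ w : W, d 1 w = w)
    (hd_one_right : ∀ w : W, d w 1 = w)
    (hd_simple_lt : ∀ (i : B) (w : W), cs.length (cs.simple i * w) = cs.length w + 1 →
      d (cs.simple i) w = cs.simple i * w)
    (hd_simple_gt : ∀ (i : B) (w : W), cs.length (cs.simple i * w) + 1 = cs.length w →
      d (cs.simple i) w = w)
    (f : W ≃* W)
    (hf_invol : ∀ w : W, f (f w) = w)
    (hf_simple : ∀ i : B, ∃ j : B, f (cs.simple i) = cs.simple j)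
    (J : Set B)
    (hWJ_fin : ((Subgroup.closure (cs.simple '' J) : Subgroup W) : Set W).Finite)
    (wJ : W) (hwJ_mem : wJ ∈ Subgroup.closure (cs.simple '' J))
    (hwJ_max : ∀ u ∈ Subgroup.closure (cs.simple '' J), cs.length u ≤ cs.length wJ)
    (wJs : W) (hwJs_mem : wJs ∈ Subgroup.closure (⇑f '' (cs.simple '' J)))
    (hwJs_max : ∀ u ∈ Subgroup.closure (⇑f '' (cs.simple '' J)),
      cs.length u ≤ cs.length wJs) :
    ∀ w : W, cs.length w = cs.length wJ + cs.length (wJ * w) →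
      f (d w (f w)⁻¹) = (d w (f w)⁻¹)⁻¹ ∧
      cs.length (d w (f w)⁻¹) = cs.length wJ + cs.length (wJ * d w (f w)⁻¹) ∧
      cs.length (d w (f w)⁻¹) = cs.length wJs + cs.length (d w (f w)⁻¹ * wJs) := by
  classical
  intro w hw
  choose τ hτ using hf_simple
  -- `f` preserves lengths
  have hfword : ∀ ω : List B, f (cs.wordProd ω) = cs.wordProd (ω.map τ) := by
    intro ω
    induction ω with
    | nil => rw [cs.wordProd_nil, map_one, List.map_nil, cs.wordProd_nil]
    | cons i ω ih =>
      rw [cs.wordProd_cons, map_mul, hτ, ih, List.map_cons, cs.wordProd_cons]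
  have hfle : ∀ v : W, cs.length (f v) ≤ cs.length v := by
    intro v
    obtain ⟨ω, hωlen, hωeq⟩ := cs.exists_reduced_word v
    calc cs.length (f v) = cs.length (cs.wordProd (ω.map τ)) := by rw [hωeq, hfword]
      _ ≤ (ω.map τ).length := cs.length_wordProd_le _
      _ = cs.length v := by rw [List.length_map, ← hωlen, ← hωeq]
  have hflen : ∀ v : W, cs.length (f v) = cs.length v := by
    intro v
    refine le_antisymm (hfle v) ?_
    have := hfle (f v)
    rwa [hf_invol v] at this
  -- descents of `w`
  have hJdesc : ∀ i ∈ J, cs.length (cs.simple i * w) < cs.length w :=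
    fun i hi => DemazureAux.descent_of_quot cs J wJ hwJ_mem hwJ_max w hw i hi
  have hdinv := DemazureAux.d_inv cs d hd_assoc hd_one_left hd_one_right hd_simple_lt hd_simple_gt
  have hdf := DemazureAux.d_f cs d hd_assoc hd_one_left hd_simple_lt hd_simple_gt f τ hτ hflen
  refine ⟨?_, ?_, ?_⟩
  · -- twisted involution
    rw [hdf w (f w)⁻¹, map_inv, hf_invol, hdinv w (f w)⁻¹, inv_inv]
  · -- lies in ᴶW
    have hxdesc : ∀ i ∈ J, cs.length (cs.simple i * d w (f w)⁻¹) < cs.length (d w (f w)⁻¹) :=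
      fun i hi => DemazureAux.d_left_descent cs d hd_assoc hd_one_left hd_simple_lt hd_simple_gt
        i w (f w)⁻¹ (hJdesc i hi)
    have hpre := DemazureAux.prefix_of_descents cs J (d w (f w)⁻¹) hxdesc wJ⁻¹ (inv_mem hwJ_mem)
    rwa [cs.length_inv, inv_inv] at hpre
  · -- lies in W^{J⋆}
    have himg : ⇑f '' (cs.simple '' J) = cs.simple '' (τ '' J) := by
      rw [Set.image_image, Set.image_image]
      exact Set.image_congr (fun i _ => hτ i)
    have hxrdesc : ∀ i ∈ τ '' J,
        cs.length (cs.simple i * (d w (f w)⁻¹)⁻¹) < cs.length (d w (f w)⁻¹)⁻¹ := by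
      rintro i ⟨i₀, hi₀, rfl⟩
      have h1 : cs.length ((f w)⁻¹ * cs.simple (τ i₀)) < cs.length (f w)⁻¹ := by
        have he : ((f w)⁻¹ * cs.simple (τ i₀))⁻¹ = f (cs.simple i₀ * w) := by
          rw [mul_inv_rev, inv_inv, cs.inv_simple, ← hτ, ← map_mul]
        rw [← cs.length_inv ((f w)⁻¹ * cs.simple (τ i₀)), he, hflen, cs.length_inv, hflen]
        exact hJdesc i₀ hi₀
      have h2 := DemazureAux.d_right_descent cs d hd_assoc hd_one_left hd_one_right
        hd_simple_lt hd_simple_gt (τ i₀) w (f w)⁻¹ h1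
      rw [show cs.simple (τ i₀) * (d w (f w)⁻¹)⁻¹ = (d w (f w)⁻¹ * cs.simple (τ i₀))⁻¹ from by
        rw [mul_inv_rev, cs.inv_simple], cs.length_inv, cs.length_inv]
      exact h2
    have hwJs_mem' : wJs ∈ Subgroup.closure (cs.simple '' (τ '' J)) := by rwa [← himg]
    have hpre3 := DemazureAux.prefix_of_descents cs (τ '' J) (d w (f w)⁻¹)⁻¹ hxrdesc
      wJs hwJs_mem'
    rwa [show wJs⁻¹ * (d w (f w)⁻¹)⁻¹ = (d w (f w)⁻¹ * wJs)⁻¹ from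
      (mul_inv_rev _ _).symm, cs.length_inv, cs.length_inv] at hpre3
end
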